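/- arXiv:2205.14746 — 2 statements merged into one kernel-verified Lean document; each statement's English description precedes it below -/
import Mathlib

section
/- Let Ω ⊂ ℝ² be open and bounded and let u ∈ L^p(Ω;ℝ²) ∩ W^{1,q}(Ω;ℝ²) with 1/p + 1/q = 1 (including p = ∞, q = 1). Then the weak Jacobian Ju satisfies, for all φ ∈ C_c^∞(Ω), ⟨Ju,φ⟩ = ½∫_Ω ∂φ/∂x₂ (u¹ ∂u²/∂x₁ − u² ∂u¹/∂x₁) dx − ½∫_Ω ∂φ/∂x₁ (u¹ ∂u²/∂x₂ − u² ∂u¹/∂x₂) dx; that is, Ju coincides with the classical distributional Jacobian determinant Det(∇u) of Morrey. -/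
open MeasureTheory Topology Filter Metric Set
open scoped ENNReal NNReal Classical

noncomputable section

/-- Euclidean space `ℝ^n`. -/
abbrev Euc (n : ℕ) : Type := EuclideanSpace ℝ (Fin n)

/-- Integral of `f` over the set `A` with respect to a signed measure `s`. -/
def sInt {X : Type} [MeasurableSpace X] (s : MeasureTheory.SignedMeasure X)
    (A : Set X) (f : X → ℝ) : ℝ :=
  ∫ x in A, f x ∂s.toJordanDecomposition.posPart -
    ∫ x in A, f x ∂s.toJordanDecomposition.negPart

/-- `j`-th partial derivative of a scalar function. -/
def pd {n : ℕ} (φ : Euc n → ℝ) (j : Fin n) (x : Euc n) : ℝ :=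
  fderiv ℝ φ x (EuclideanSpace.single j (1 : ℝ))

/-- `(i,j)` entry of the Jacobian matrix of a vector-valued function. -/
def pdv {n m : ℕ} (v : Euc n → Euc m) (i : Fin m) (j : Fin n) (x : Euc n) : ℝ :=
  fderiv ℝ v x (EuclideanSpace.single j (1 : ℝ)) i

/-- Smooth compactly supported test functions on an open set `Ω`. -/
def IsTest {n : ℕ} (Ω : Set (Euc n)) (φ : Euc n → ℝ) : Prop :=
  ContDiff ℝ (⊤ : ℕ∞) φ ∧ HasCompactSupport φ ∧ tsupport φ ⊆ Ω

/-- Continuous compactly supported functions on `Ω`. -/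
def IsCc {n : ℕ} (Ω : Set (Euc n)) (φ : Euc n → ℝ) : Prop :=
  Continuous φ ∧ HasCompactSupport φ ∧ tsupport φ ⊆ Ω

/-- Continuous compactly supported functions on `Ω × ℝ^m`. -/
def IsTestP {n m : ℕ} (Ω : Set (Euc n)) (φ : Euc n × Euc m → ℝ) : Prop :=
  Continuous φ ∧ HasCompactSupport φ ∧ tsupport φ ⊆ Ω ×ˢ (univ : Set (Euc m))

/-- `x` is a Lebesgue point of `u` with Lebesgue value `y`. -/
def IsLebPoint {n m : ℕ} (u : Euc n → Euc m) (x : Euc n) (y : Euc m) : Prop :=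
  Tendsto (fun r : ℝ => ⨍ z in Metric.ball x r, ‖u z - y‖ ∂volume) (𝓝[>] 0) (𝓝 0)

/-- A function of bounded variation `u ∈ BV(Ω;ℝ^m)`, packaged together with the data
canonically associated with it: the diffuse part `Dd` and the jump part `Ds` of its
distributional derivative (matrices of finite signed measures), its jump set, the one-sided
traces `up = u⁺`, `um = u⁻`, a unit normal `nrml` to the jump set, and the precise
representative `prec = ū` (equal to the Lebesgue value `H^{n-1}`-a.e. off the jump set and to
`(u⁺+u⁻)/2` on the jump set). -/
structure BVFun (n m : ℕ) (Ω : Set (Euc n)) where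
  toFun : Euc n → Euc m
  integrable : IntegrableOn toFun Ω volume
  Dd : Fin m → Fin n → MeasureTheory.SignedMeasure (Euc n)
  Ds : Fin m → Fin n → MeasureTheory.SignedMeasure (Euc n)
  jumpSet : Set (Euc n)
  jumpSet_mble : MeasurableSet jumpSet
  jumpSet_sub : jumpSet ⊆ Ω
  up : Euc n → Euc m
  um : Euc n → Euc m
  nrml : Euc n → Euc n
  prec : Euc n → Euc m
  ibp : ∀ (i : Fin m) (j : Fin n) (φ : Euc n → ℝ), IsTest Ω φ →
    ∫ x in Ω, toFun x i * pd φ j x ∂volume =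
      - (sInt (Dd i j) Set.univ φ + sInt (Ds i j) Set.univ φ)
  dd_sub : ∀ i j, ∀ A : Set (Euc n), MeasurableSet A → A ∩ Ω = ∅ → Dd i j A = 0
  ds_sub : ∀ i j, ∀ A : Set (Euc n), MeasurableSet A → A ∩ Ω = ∅ → Ds i j A = 0
  dd_diffuse : ∀ i j, ∀ A : Set (Euc n), MeasurableSet A →
    μH[(n : ℝ) - 1] A < ⊤ → Dd i j A = 0
  dd_off_jump : ∀ i j, (Dd i j).totalVariation jumpSet = 0
  ds_jump_repr : ∀ i j, ∀ A : Set (Euc n), MeasurableSet A →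
    Ds i j A = ∫ x in A ∩ jumpSet, (up x i - um x i) * nrml x j ∂(μH[(n : ℝ) - 1])
  prec_leb : μH[(n : ℝ) - 1] {x | x ∈ Ω \ jumpSet ∧ ¬ IsLebPoint toFun x (prec x)} = 0
  prec_jump : ∀ x ∈ jumpSet, prec x = (2⁻¹ : ℝ) • (up x + um x)

/-- The full distributional derivative `Du = D^D u + D^S u`. -/
def BVFun.D {n m : ℕ} {Ω : Set (Euc n)} (u : BVFun n m Ω) (i : Fin m) (j : Fin n) :
    MeasureTheory.SignedMeasure (Euc n) := u.Dd i j + u.Ds i j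

/-- Total variation of a matrix-valued measure on a set, via duality with matrix fields of
pointwise (Frobenius) norm at most one. -/
def matVar {n m : ℕ} (D : Fin m → Fin n → MeasureTheory.SignedMeasure (Euc n))
    (A : Set (Euc n)) : ℝ :=
  sSup { r : ℝ | ∃ φ : Fin m → Fin n → Euc n → ℝ,
    (∀ i j, Measurable (φ i j)) ∧ (∀ x, ∑ i, ∑ j, (φ i j x) ^ 2 ≤ 1) ∧
    r = ∑ i, ∑ j, sInt (D i j) A (φ i j) }

/-- The total variation `|Du|(Ω)` of a `BV` function. -/
def BVFun.var {n m : ℕ} {Ω : Set (Euc n)} (u : BVFun n m Ω) : ℝ := matVar u.D Ω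

/-- Pointwise Frobenius norm of the gradient of a (differentiable) map. -/
def gradFrob {n m : ℕ} (v : Euc n → Euc m) (x : Euc n) : ℝ :=
  Real.sqrt (∑ i, ∑ j, (pdv v i j x) ^ 2)

/-- `v ∈ C¹(Ω;ℝ^m) ∩ W^{1,1}(Ω;ℝ^m)`. -/
def IsC1W11 {n m : ℕ} (Ω : Set (Euc n)) (v : Euc n → Euc m) : Prop :=
  ContDiffOn ℝ 1 v Ω ∧ IntegrableOn v Ω volume ∧ IntegrableOn (gradFrob v) Ω volume

/-- The sequence of (smooth) maps `v k` converges strictly in `BV(Ω;ℝ^m)` to `u`: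
`L¹(Ω)` convergence together with convergence of the total variations. -/
def StrictApprox {n m : ℕ} {Ω : Set (Euc n)} (u : BVFun n m Ω) (v : ℕ → Euc n → Euc m) :
    Prop :=
  Tendsto (fun k => ∫ x in Ω, ‖v k x - u.toFun x‖ ∂volume) atTop (𝓝 0) ∧
  Tendsto (fun k => ∫ x in Ω, gradFrob (v k) x ∂volume) atTop (𝓝 u.var)

/-- Strict convergence in `BV(Ω;ℝ^m)` of a sequence of `BV` functions. -/
def StrictConvBV {n m : ℕ} {Ω : Set (Euc n)} (uk : ℕ → BVFun n m Ω) (u : BVFun n m Ω) :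
    Prop :=
  Tendsto (fun k => ∫ x in Ω, ‖(uk k).toFun x - u.toFun x‖ ∂volume) atTop (𝓝 0) ∧
  Tendsto (fun k => (uk k).var) atTop (𝓝 u.var)

/-- `μ` is the minimal lifting of `Du` (Jerrard–Jung), characterized by convergence of the
elementary liftings along `C¹ ∩ W^{1,1}` sequences converging strictly to `u`. -/
def IsMinimalLifting {n m : ℕ} (Ω : Set (Euc n)) (u : BVFun n m Ω)
    (μ : Fin m → Fin n → MeasureTheory.SignedMeasure (Euc n × Euc m)) : Prop :=
  ∀ v : ℕ → Euc n → Euc m, (∀ k, IsC1W11 Ω (v k)) → StrictApprox u v →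
    ∀ (i : Fin m) (j : Fin n) (φ : Euc n × Euc m → ℝ), IsTestP Ω φ →
      Tendsto (fun k => ∫ x in Ω, φ (x, v k x) * pdv (v k) i j x ∂volume)
        atTop (𝓝 (sInt (μ i j) univ φ))

/-- The explicit expression of the minimal lifting `μ_u` in terms of the data of `u`:
`∫ φ dμ^i_j = ∫_{Ω∖S_u} φ(x,ū(x)) d(D^D_j u^i) + ∫_{S_u} ∫₀¹ φ(x,ū^θ(x)) dθ d(D^S_j u^i)`. -/
def liftInt {n m : ℕ} {Ω : Set (Euc n)} (u : BVFun n m Ω) (i : Fin m) (j : Fin n)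
    (φ : Euc n × Euc m → ℝ) : ℝ :=
  sInt (u.Dd i j) (Ω \ u.jumpSet) (fun x => φ (x, u.prec x)) +
    sInt (u.Ds i j) u.jumpSet
      (fun x => ∫ θ in (0:ℝ)..1, φ (x, θ • u.up x + (1 - θ) • u.um x))

/-- `μ` is the (uniquely determined) minimal lifting of `Du`, expressed through the explicit
formula, and is a finite measure on `Ω × ℝ^m`. -/
def IsLiftingOf {n m : ℕ} {Ω : Set (Euc n)} (u : BVFun n m Ω)
    (μ : Fin m → Fin n → MeasureTheory.SignedMeasure (Euc n × Euc m)) : Prop :=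
  (∀ i j, ∀ A : Set (Euc n × Euc m), MeasurableSet A →
    A ∩ (Ω ×ˢ (univ : Set (Euc m))) = ∅ → μ i j A = 0) ∧
  ∀ (i : Fin m) (j : Fin n) (φ : Euc n × Euc m → ℝ), IsTestP Ω φ →
    sInt (μ i j) univ φ = liftInt u i j φ

/-- Property (P). -/
def PropP {n m : ℕ}
    (μ : Fin m → Fin n → MeasureTheory.SignedMeasure (Euc n × Euc m))
    (i i' : Fin m) (j j' : Fin n) : Prop :=
  Integrable (fun p : Euc n × Euc m => p.2 i) ((μ i' j).totalVariation) ∧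
  Integrable (fun p : Euc n × Euc m => p.2 i) ((μ i' j').totalVariation) ∧
  Integrable (fun p : Euc n × Euc m => p.2 i') ((μ i j).totalVariation) ∧
  Integrable (fun p : Euc n × Euc m => p.2 i') ((μ i j').totalVariation)

/-- The action `∫_Ω φ d(ν_u)^{i,h}_j` of the measure `(ν_u)^{i,h}_j = [u^h D_j u^i]`,
written through its explicit expression. -/
def nuInt {n m : ℕ} {Ω : Set (Euc n)} (u : BVFun n m Ω) (i h : Fin m) (j : Fin n)
    (φ : Euc n → ℝ) : ℝ :=
  sInt (u.Dd i j) (Ω \ u.jumpSet) (fun x => φ x * u.prec x h) +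
    sInt (u.Ds i j) u.jumpSet (fun x => φ x * u.prec x h)

/-- `∫_Ω φ dλ_j` where, in dimension `m = n = 2`,
`λ_j := ½([u¹ D_j u²] − [u² D_j u¹])`. -/
def lamInt {Ω : Set (Euc 2)} (u : BVFun 2 2 Ω) (j : Fin 2) (φ : Euc 2 → ℝ) : ℝ :=
  (2⁻¹ : ℝ) * (nuInt u 1 0 j φ - nuInt u 0 1 j φ)

/-- The weak Jacobian `Ju = ∂ T_u` of `u ∈ BV(Ω;ℝ²)`, as a distribution:
`⟨Ju,φ⟩ = ½∫ ∂₂φ d([u¹D₁u²]−[u²D₁u¹]) − ½∫ ∂₁φ d([u¹D₂u²]−[u²D₂u¹])`. -/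
def Jint {Ω : Set (Euc 2)} (u : BVFun 2 2 Ω) (φ : Euc 2 → ℝ) : ℝ :=
  lamInt u 0 (pd φ 1) - lamInt u 1 (pd φ 0)

/-- Flat norm on `Ω` of a distribution `T`: the supremum of `T(φ)` over (smooth compactly
supported) test functions with `‖φ‖_∞ + Lip(φ) ≤ 1`. -/
def flatNorm {n : ℕ} (Ω : Set (Euc n)) (T : (Euc n → ℝ) → ℝ) : ℝ :=
  sSup { r : ℝ | ∃ φ : Euc n → ℝ, ∃ a b : ℝ, IsTest Ω φ ∧ 0 ≤ a ∧ 0 ≤ b ∧ a + b ≤ 1 ∧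
    (∀ x, |φ x| ≤ a) ∧ (∀ x y, |φ x - φ y| ≤ b * dist x y) ∧ r = T φ }

/-- `g` is the (matrix of the) approximate gradient of `u` and `u` is a special function of
bounded variation: the diffuse part of `Du` is absolutely continuous with density `g`. -/
def IsApproxGrad {n m : ℕ} {Ω : Set (Euc n)} (u : BVFun n m Ω)
    (g : Fin m → Fin n → Euc n → ℝ) : Prop :=
  (∀ i j, Measurable (g i j)) ∧ (∀ i j, IntegrableOn (g i j) Ω volume) ∧
  ∀ i j, ∀ A : Set (Euc n), MeasurableSet A → u.Dd i j A = ∫ x in A ∩ Ω, g i j x ∂volume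

/-- `u` takes values in the unit circle `S¹` (a.e. on `Ω`). -/
def IsSphereValued {n : ℕ} {Ω : Set (Euc n)} (u : BVFun n 2 Ω) : Prop :=
  ∀ᵐ x ∂(volume.restrict Ω), ‖u.toFun x‖ = 1

/-- A bounded open planar set with Lipschitz boundary: near every boundary point, up to a
rigid motion, the set is the subgraph of a Lipschitz function. -/
def IsLipschitzDomain (Ω : Set (Euc 2)) : Prop :=
  ∀ x ∈ frontier Ω, ∃ (e : Euc 2 ≃ᵢ Euc 2) (f : ℝ → ℝ) (L : ℝ≥0) (U : Set (Euc 2)),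
    IsOpen U ∧ x ∈ U ∧ LipschitzWith L f ∧
    Ω ∩ U = {p ∈ U | f (e p 0) < e p 1}

/-- The energy `F_ε(u) = ½∫_Ω |∇u|² dx + ε⁻¹ H¹(closure S_u)` of the core-radius-free model,
with value `+∞` outside the admissible class `AD(Ω,Ω')` of `S¹`-valued `SBV²` maps whose
jump set has closure contained in the closure of `Ω'`. -/
def ADenergy (Ω Ω' : Set (Euc 2)) (ε : ℝ) (u : BVFun 2 2 Ω) : ℝ≥0∞ :=
  sInf { E : ℝ≥0∞ | ∃ g : Fin 2 → Fin 2 → Euc 2 → ℝ, IsApproxGrad u g ∧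
    IsSphereValued u ∧ (∀ i j, MemLp (g i j) 2 (volume.restrict Ω)) ∧
    closure u.jumpSet ⊆ closure Ω' ∧
    E = ENNReal.ofReal ((2⁻¹ : ℝ) * ∫ x in Ω, ∑ i, ∑ j, (g i j x) ^ 2 ∂volume) +
        ENNReal.ofReal (1 / ε) * μH[1] (closure u.jumpSet) }

/-- `‖Ju − π Σᵢ zⁱ δ_{xⁱ}‖_{flat,Ω}`. -/
def flatDistToDirac (Ω : Set (Euc 2)) {W : Set (Euc 2)} (u : BVFun 2 2 W) {I : ℕ}
    (z : Fin I → ℤ) (pts : Fin I → Euc 2) : ℝ :=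
  flatNorm Ω (fun φ => Jint u φ - Real.pi * ∑ i, (z i : ℝ) * φ (pts i))

/-- The vector field `λ_u = ½(−u¹∂₂u² + u²∂₂u¹, u¹∂₁u² − u²∂₁u¹)` associated with a planar
Sobolev map `u` with (weak) gradient `g`. -/
def lamF (w : Euc 2 → Euc 2) (g : Fin 2 → Fin 2 → Euc 2 → ℝ) (j : Fin 2) (x : Euc 2) : ℝ :=
  if j = 0 then (2⁻¹ : ℝ) * (-(w x 0) * g 1 1 x + (w x 1) * g 0 1 x)
  else (2⁻¹ : ℝ) * ((w x 0) * g 1 0 x - (w x 1) * g 0 0 x)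

/-- `u ∈ H¹(V';S¹)` with weak gradient `g`. -/
def H1S1On (V' : Set (Euc 2)) (u : Euc 2 → Euc 2) (g : Fin 2 → Fin 2 → Euc 2 → ℝ) : Prop :=
  IntegrableOn u V' volume ∧
  (∀ᵐ x ∂(volume.restrict V'), ‖u x‖ = 1) ∧
  (∀ i j, MemLp (g i j) 2 (volume.restrict V')) ∧
  (∀ (i j : Fin 2) (φ : Euc 2 → ℝ), IsTest V' φ →
    ∫ x in V', u x i * pd φ j x ∂volume = - ∫ x in V', φ x * g i j x ∂volume)

/-- Union of the open balls of a finite family (a ball is encoded as a centre-radius pair). -/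
def ballsUnion (S : Finset (Euc 2 × ℝ)) : Set (Euc 2) := ⋃ p ∈ S, Metric.ball p.1 p.2

/-- Union of the corresponding closed balls. -/
def ballsUnionC (S : Finset (Euc 2 × ℝ)) : Set (Euc 2) := ⋃ p ∈ S, Metric.closedBall p.1 p.2

/-- Sum of the radii of a finite family of balls. -/
def RadSum (S : Finset (Euc 2 × ℝ)) : ℝ := ∑ p ∈ S, p.2

/-- The balls of the family are pairwise essentially disjoint (disjoint closures). -/
def PairwiseDisjointC (S : Finset (Euc 2 × ℝ)) : Prop :=
  (S : Set (Euc 2 × ℝ)).Pairwise fun p q =>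
    Disjoint (Metric.closedBall p.1 p.2) (Metric.closedBall q.1 q.2)

/-- `u ∈ H¹(V(B);S¹)` (with weak gradient `g`) is admissible for the degrees `z`:
`deg(u,∂Bⁿ) = zⁿ` for every ball of the family, expressed distributionally through test
functions that are constant on each closed ball. -/
def AdmDeg (V : Set (Euc 2)) (S : Finset (Euc 2 × ℝ)) (z : Euc 2 × ℝ → ℤ)
    (u : Euc 2 → Euc 2) (g : Fin 2 → Fin 2 → Euc 2 → ℝ) : Prop :=
  H1S1On (V \ ballsUnionC S) u g ∧
  ∀ φ : Euc 2 → ℝ, IsTest V φ →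
    (∀ p ∈ S, ∃ c : ℝ, ∀ x ∈ Metric.closedBall p.1 p.2, φ x = c) →
    ∫ x in V \ ballsUnionC S, (∑ j, lamF u g j x * pd φ j x) ∂volume
      = Real.pi * ∑ p ∈ S, (z p : ℝ) * φ p.1

/-- `F(B,μ,V)`: the minimal Dirichlet energy among `S¹`-valued `H¹` maps on `V(B)` with the
prescribed degrees. -/
def Fmin (V : Set (Euc 2)) (S : Finset (Euc 2 × ℝ)) (z : Euc 2 × ℝ → ℤ) : ℝ≥0∞ :=
  sInf { E : ℝ≥0∞ | ∃ u g, AdmDeg V S z u g ∧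
    E = ENNReal.ofReal (∫ x in V \ ballsUnionC S, ∑ i, ∑ j, (g i j x) ^ 2 ∂volume) }

/-- `μ(A) = Σ_{x(Bⁿ) ∈ A} zⁿ` for `μ = Σ zⁿ δ_{x(Bⁿ)}`. -/
def muBall (S : Finset (Euc 2 × ℝ)) (z : Euc 2 × ℝ → ℤ) (A : Set (Euc 2)) : ℤ :=
  ∑ p ∈ S, if p.1 ∈ A then z p else 0


/-- The energy `F^w_ε` with Dirichlet datum `w` on `Ω̂ ∖ closure Ω`. -/
def ADenergyW (Ωhat Ω : Set (Euc 2)) (w : Euc 2 → Euc 2) (ε : ℝ)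
    (u : BVFun 2 2 Ωhat) : ℝ≥0∞ :=
  sInf { E : ℝ≥0∞ | ∃ g : Fin 2 → Fin 2 → Euc 2 → ℝ, IsApproxGrad u g ∧
    IsSphereValued u ∧ (∀ i j, MemLp (g i j) 2 (volume.restrict Ωhat)) ∧
    (∀ᵐ x ∂(volume.restrict (Ωhat \ closure Ω)), u.toFun x = w x) ∧
    E = ENNReal.ofReal ((2⁻¹ : ℝ) * ∫ x in Ω, ∑ i, ∑ j, (g i j x) ^ 2 ∂volume) +
        ENNReal.ofReal (1 / ε) * μH[1] (closure u.jumpSet) }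

/-- `d = deg(w,∂Ω)`: the degree of the `S¹`-valued Sobolev map `w` (with weak gradient `gw`)
on `∂Ω`, expressed through the circulation `∫ ∇φ·λ_w dx = π d` for cutoff functions `φ`
supported in `Ω̂` and equal to `1` on a neighbourhood of `closure Ω`. -/
def IsDegOn (Ωhat Ω : Set (Euc 2)) (w : Euc 2 → Euc 2)
    (gw : Fin 2 → Fin 2 → Euc 2 → ℝ) (d : ℤ) : Prop :=
  ∀ φ : Euc 2 → ℝ, IsTest Ωhat φ → (∀ᶠ x in 𝓝ˢ (closure Ω), φ x = 1) →
    ∫ x in Ωhat \ closure Ω, (∑ j, lamF w gw j x * pd φ j x) ∂volume = Real.pi * (d : ℝ)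


/-! ### Auxiliary lemmas -/

lemma jordan_wd {X : Type} [MeasurableSpace X] {μ : Measure X} {ρ : X → ℝ}
    (hm : Measurable ρ) (hi : Integrable ρ μ) :
    (SignedMeasure.toJordanDecomposition (μ.withDensityᵥ ρ)).posPart
        = μ.withDensity (fun x => ENNReal.ofReal (ρ x)) ∧
    (SignedMeasure.toJordanDecomposition (μ.withDensityᵥ ρ)).negPart
        = μ.withDensity (fun x => ENNReal.ofReal (-ρ x)) := by
  have htμ : (0 : SignedMeasure X) ⟂ᵥ μ.toENNRealVectorMeasure :=
    VectorMeasure.MutuallySingular.zero_left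
  have hadd : μ.withDensityᵥ ρ = 0 + μ.withDensityᵥ ρ := by rw [zero_add]
  have h := SignedMeasure.toJordanDecomposition_eq_of_eq_add_withDensity hm hi htμ hadd
  rw [h]
  constructor <;> simp [SignedMeasure.toJordanDecomposition_zero]

lemma sInt_wd {X : Type} [MeasurableSpace X] {μ : Measure X} {ρ : X → ℝ}
    (hm : Measurable ρ) (hi : Integrable ρ μ) {A : Set X} (hA : MeasurableSet A)
    {f : X → ℝ} (hfm : AEStronglyMeasurable f (μ.restrict A))
    (hfi : Integrable (fun x => f x * ρ x) (μ.restrict A)) :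
    sInt (μ.withDensityᵥ ρ) A f = ∫ x in A, f x * ρ x ∂μ := by
  obtain ⟨hpos, hneg⟩ := jordan_wd hm hi
  have h1 : ∫ x in A, f x ∂(SignedMeasure.toJordanDecomposition (μ.withDensityᵥ ρ)).posPart
      = ∫ x in A, ((ρ x).toNNReal : ℝ) * f x ∂μ := by
    rw [hpos]
    have : (fun x => ENNReal.ofReal (ρ x)) = (fun x => ((ρ x).toNNReal : ℝ≥0∞)) := rfl
    rw [this, setIntegral_withDensity_eq_setIntegral_smul hm.real_toNNReal f hA]
    simp [NNReal.smul_def]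
  have h2 : ∫ x in A, f x ∂(SignedMeasure.toJordanDecomposition (μ.withDensityᵥ ρ)).negPart
      = ∫ x in A, (((-ρ x).toNNReal : ℝ)) * f x ∂μ := by
    rw [hneg]
    have : (fun x => ENNReal.ofReal (-ρ x)) = (fun x => (((-ρ x)).toNNReal : ℝ≥0∞)) := rfl
    have hm' : Measurable fun x => (-ρ x).toNNReal := hm.neg.real_toNNReal
    rw [this, setIntegral_withDensity_eq_setIntegral_smul hm' f hA]
    simp [NNReal.smul_def]
  have key : ∀ x, (((ρ x).toNNReal : ℝ)) - (((-ρ x).toNNReal : ℝ)) = ρ x := by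
    intro x
    rw [Real.coe_toNNReal', Real.coe_toNNReal']
    rcases le_total (ρ x) 0 with h | h
    · rw [max_eq_right h, max_eq_left (by linarith)]; ring
    · rw [max_eq_left h, max_eq_right (by linarith)]; ring
  have bnd : ∀ (σ : X → ℝ), (∀ x, |σ x| ≤ |ρ x|) → Measurable σ →
      Integrable (fun x => σ x * f x) (μ.restrict A) := by
    intro σ hσ hσm
    refine Integrable.mono' hfi.abs
      ((hσm.aestronglyMeasurable.restrict).mul hfm) ?_
    filter_upwards with x
    rw [Real.norm_eq_abs, abs_mul, abs_mul, mul_comm (|f x|)]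
    exact mul_le_mul_of_nonneg_right (hσ x) (abs_nonneg _)
  have hint1 : Integrable (fun x => ((ρ x).toNNReal : ℝ) * f x) (μ.restrict A) := by
    refine bnd _ (fun x => ?_) hm.real_toNNReal.coe_nnreal_real
    rw [Real.coe_toNNReal', abs_of_nonneg (le_max_right _ _)]
    exact max_le (le_abs_self _) (abs_nonneg _)
  have hint2 : Integrable (fun x => ((-ρ x).toNNReal : ℝ) * f x) (μ.restrict A) := by
    refine bnd _ (fun x => ?_) hm.neg.real_toNNReal.coe_nnreal_real
    rw [Real.coe_toNNReal', abs_of_nonneg (le_max_right _ _)]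
    exact max_le ((le_abs_self _).trans (abs_neg (ρ x)).le) (abs_nonneg _)
  rw [sInt, h1, h2, ← integral_sub hint1 hint2]
  refine setIntegral_congr_fun hA fun x _ => ?_
  rw [← sub_mul, key, mul_comm]

lemma vol_null_of_H1 {N : Set (Euc 2)} (h : μH[1] N = 0) : volume N = 0 := by
  have h2 : μH[(2:ℝ)] N = 0 :=
    le_antisymm ((MeasureTheory.Measure.hausdorffMeasure_mono one_le_two N).trans h.le)
      (zero_le)
  have hLip : LipschitzWith 1 (⇑(WithLp.equiv 2 (Fin 2 → ℝ))) := PiLp.lipschitzWith_ofLp 2 _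
  have himg : μH[(2:ℝ)] ((WithLp.equiv 2 (Fin 2 → ℝ)) '' N) = 0 := by
    have := hLip.hausdorffMeasure_image_le (by norm_num : (0:ℝ) ≤ 2) N
    simpa [h2] using this
  have hvol : volume ((WithLp.equiv 2 (Fin 2 → ℝ)) '' N) = 0 := by
    have hpi : (μH[(2:ℝ)] : Measure (Fin 2 → ℝ)) = volume := by
      simpa using MeasureTheory.hausdorffMeasure_pi_real (ι := Fin 2)
    rw [← hpi]; exact himg
  obtain ⟨B, hBsub, hBm, hB0⟩ := exists_measurable_superset_of_null hvol
  have := (EuclideanSpace.volume_preserving_symm_measurableEquiv_toLp (Fin 2)).measure_preimage_equiv B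
  refine measure_mono_null (fun x hx => ?_) (le_antisymm (this.le.trans hB0.le) (zero_le))
  exact mem_preimage.mpr (hBsub ⟨x, hx, rfl⟩)

lemma leb_unique {Ω : Set (Euc 2)} (hΩ : IsOpen Ω) {u : Euc 2 → Euc 2} {x : Euc 2}
    {a b : Euc 2} (hx : x ∈ Ω) (hu : IntegrableOn u Ω volume)
    (ha : IsLebPoint u x a) (hb : IsLebPoint u x b) : a = b := by
  obtain ⟨ε, hε, hball⟩ := Metric.isOpen_iff.mp hΩ x hx
  have key : ∀ r ∈ Ioo (0:ℝ) ε,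
      ‖a - b‖ ≤ (⨍ z in Metric.ball x r, ‖u z - a‖ ∂volume) +
        ⨍ z in Metric.ball x r, ‖u z - b‖ ∂volume := by
    intro r hr
    have hsub : Metric.ball x r ⊆ Ω := (Metric.ball_subset_ball hr.2.le).trans hball
    have hμpos : 0 < volume (Metric.ball x r) := Metric.measure_ball_pos _ _ hr.1
    have hμlt : volume (Metric.ball x r) < ⊤ := measure_ball_lt_top
    have hia : IntegrableOn (fun z => ‖u z - a‖) (Metric.ball x r) volume := by
      exact ((hu.mono_set hsub).sub (integrableOn_const hμlt.ne)).norm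
    have hib : IntegrableOn (fun z => ‖u z - b‖) (Metric.ball x r) volume := by
      exact ((hu.mono_set hsub).sub (integrableOn_const hμlt.ne)).norm
    have h1 : ‖a - b‖ = ⨍ z in Metric.ball x r, ‖a - b‖ ∂volume :=
      (setAverage_const hμpos.ne' hμlt.ne _).symm
    rw [h1, setAverage_eq, setAverage_eq, setAverage_eq, smul_eq_mul, smul_eq_mul,
      smul_eq_mul, ← mul_add]
    refine mul_le_mul_of_nonneg_left ?_ (by positivity)
    rw [← integral_add hia hib]
    refine setIntegral_mono_on (integrableOn_const hμlt.ne) (hia.add hib)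
      measurableSet_ball (fun z _ => ?_)
    calc ‖a - b‖ = ‖(u z - b) - (u z - a)‖ := by rw [sub_sub_sub_cancel_left]
      _ ≤ ‖u z - b‖ + ‖u z - a‖ := norm_sub_le _ _
      _ = ‖u z - a‖ + ‖u z - b‖ := add_comm _ _
  have hlim : Tendsto (fun r : ℝ => (⨍ z in Metric.ball x r, ‖u z - a‖ ∂volume) +
      ⨍ z in Metric.ball x r, ‖u z - b‖ ∂volume) (𝓝[>] 0) (𝓝 0) := by
    simpa using ha.add hb
  have : ‖a - b‖ ≤ 0 := by
    refine ge_of_tendsto hlim ?_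
    filter_upwards [Ioo_mem_nhdsGT_of_mem (by constructor <;> [exact le_refl 0; exact hε] :
      (0:ℝ) ∈ Ico 0 ε)] with r hr using key r hr
  have := norm_le_zero_iff.mp this
  exact sub_eq_zero.mp this

lemma ae_lebPoint {Ω : Set (Euc 2)} (hΩo : IsOpen Ω) {u : Euc 2 → Euc 2}
    (hu : IntegrableOn u Ω volume) :
    ∀ᵐ x ∂(volume.restrict Ω), IsLebPoint u x (u x) := by
  have hΩm : MeasurableSet Ω := hΩo.measurableSet
  have hsm : AEStronglyMeasurable u (volume.restrict Ω) := hu.aestronglyMeasurable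
  set f0 := hsm.mk u with hf0
  have heq : u =ᵐ[volume.restrict Ω] f0 := hsm.ae_eq_mk
  set F : Euc 2 → Euc 2 := Ω.indicator f0 with hF
  have hFi : Integrable F volume := (hu.congr_fun_ae heq).integrable_indicator hΩm
  have hFl : LocallyIntegrable F volume := hFi.locallyIntegrable
  have hLDT := IsUnifLocDoublingMeasure.ae_tendsto_average_norm_sub (μ := volume) hFl (1:ℝ)
  have hFu : F =ᵐ[volume.restrict Ω] u := by
    filter_upwards [heq, ae_restrict_mem hΩm] with x h1 h2
    rw [hF]; simp [Set.indicator_of_mem h2, h1]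
  filter_upwards [ae_restrict_of_ae hLDT, hFu, ae_restrict_mem hΩm] with x hx hFux hxΩ
  have hx' : Tendsto (fun r : ℝ => ⨍ y in closedBall x r, ‖F y - F x‖ ∂volume)
      (𝓝[>] 0) (𝓝 0) := by
    refine hx (fun _ => x) id tendsto_id ?_
    filter_upwards [self_mem_nhdsWithin] with r hr
    exact mem_closedBall_self (by simpa using le_of_lt hr)
  obtain ⟨ε, hε, hball⟩ := Metric.isOpen_iff.mp hΩo x hxΩ
  have hev : ∀ r ∈ Ioo (0:ℝ) ε,
      (⨍ z in Metric.ball x r, ‖u z - u x‖ ∂volume)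
        = ⨍ y in closedBall x r, ‖F y - F x‖ ∂volume := by
    intro r hr
    have hsub : closedBall x r ⊆ Ω := (Metric.closedBall_subset_ball hr.2).trans hball
    have hsetae : Metric.ball x r =ᵐ[volume] closedBall x r := by
      rw [MeasureTheory.ae_eq_set]
      constructor
      · have : Metric.ball x r \ closedBall x r = ∅ := by
          rw [diff_eq_empty]; exact Metric.ball_subset_closedBall
        rw [this]; simp
      · refine measure_mono_null (fun z hz => ?_) (Measure.addHaar_sphere volume x r)
        rcases hz with ⟨h1, h2⟩
        simp only [Metric.mem_closedBall] at h1
        simp only [Metric.mem_ball, not_lt] at h2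
        exact Metric.mem_sphere.mpr (le_antisymm h1 h2)
    have hres : volume.restrict (Metric.ball x r) = volume.restrict (closedBall x r) :=
      Measure.restrict_congr_set hsetae
    have hvol : volume (Metric.ball x r) = volume (closedBall x r) := measure_congr hsetae
    have huF : u =ᵐ[volume.restrict (closedBall x r)] F :=
      ae_restrict_of_ae_restrict_of_subset hsub hFu.symm
    calc (⨍ z in Metric.ball x r, ‖u z - u x‖ ∂volume)
        = ⨍ z in closedBall x r, ‖u z - u x‖ ∂volume := by
          rw [setAverage_eq, setAverage_eq, hres, measureReal_def, measureReal_def, hvol]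
      _ = ⨍ y in closedBall x r, ‖F y - F x‖ ∂volume := by
          refine average_congr ?_
          filter_upwards [huF] with z hz
          rw [hz, hFux]
  rw [IsLebPoint]
  refine Tendsto.congr' ?_ hx'
  filter_upwards [Ioo_mem_nhdsGT_of_mem (⟨le_refl 0, hε⟩ : (0:ℝ) ∈ Ico 0 ε)] with r hr
  exact (hev r hr).symm

/-- **Proposition.** Let `Ω ⊂ ℝ²` be open and bounded and let
`u ∈ L^p(Ω;ℝ²) ∩ W^{1,q}(Ω;ℝ²)` with `1/p + 1/q = 1`.  Then the weak Jacobian `Ju`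
coincides with the classical distributional Jacobian determinant `Det(∇u)` of Morrey:
`⟨Ju,φ⟩ = ∫_Ω ∇φ · λ_u dx` for all `φ ∈ C_c^∞(Ω)`. -/
theorem stmt5_jacobian_coincides (Ω : Set (Euc 2))
    (hΩo : IsOpen Ω) (hΩb : Bornology.IsBounded Ω)
    (u : BVFun 2 2 Ω) (g : Fin 2 → Fin 2 → Euc 2 → ℝ)
    (p q : ℝ≥0∞) (hp : 1 ≤ p) (hq : 1 ≤ q) (hpq : 1 / p + 1 / q = 1)
    -- `u ∈ L^p(Ω;ℝ²)`
    (hLp : MemLp u.toFun p (volume.restrict Ω))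
    -- `u ∈ W^{1,q}(Ω;ℝ²)`: no jump part, and the diffuse derivative has density `g ∈ L^q`
    (hW : IsApproxGrad u g)
    (hgq : ∀ i j, MemLp (g i j) q (volume.restrict Ω))
    (hnojump : ∀ i j, u.Ds i j = 0) :
    ∀ φ : Euc 2 → ℝ, IsTest Ω φ →
      Jint u φ =
        ∫ x in Ω, (lamF u.toFun g 0 x * pd φ 0 x + lamF u.toFun g 1 x * pd φ 1 x) ∂volume := by
  intro φ hφ
  obtain ⟨hφsm, hφcs, hφsup⟩ := hφ
  have hΩm : MeasurableSet Ω := hΩo.measurableSet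
  have hSm : MeasurableSet u.jumpSet := u.jumpSet_mble
  obtain ⟨hgm, hgi, hdd⟩ := hW
  set S := u.jumpSet with hS
  -- test function derivatives: continuous and bounded
  have hpdc : ∀ j : Fin 2, Continuous (pd φ j) := by
    intro j
    exact (hφsm.continuous_fderiv (by simp)).clm_apply continuous_const
  have hpdb : ∀ j : Fin 2, ∃ C, ∀ x, |pd φ j x| ≤ C := by
    intro j
    have hcs : HasCompactSupport (pd φ j) := by
      have := (hφcs.fderiv ℝ).comp_left
        (g := fun L : Euc 2 →L[ℝ] ℝ => L (EuclideanSpace.single j (1:ℝ))) rfl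
      exact this
    obtain ⟨C, hC⟩ := hcs.exists_bound_of_continuous (hpdc j)
    exact ⟨C, fun x => by simpa [Real.norm_eq_abs] using hC x⟩
  -- density
  set ρ : Fin 2 → Fin 2 → Euc 2 → ℝ := fun i j => Ω.indicator (g i j) with hρ
  have hρm : ∀ i j, Measurable (ρ i j) := fun i j => (hgm i j).indicator hΩm
  have hρi : ∀ i j, Integrable (ρ i j) volume := fun i j =>
    (hgi i j).integrable_indicator hΩm
  have hDdeq : ∀ i j, u.Dd i j = volume.withDensityᵥ (ρ i j) := by
    intro i j
    refine VectorMeasure.ext fun A hA => ?_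
    rw [hdd i j A hA, withDensityᵥ_apply (hρi i j) hA, hρ]
    rw [setIntegral_indicator hΩm]
  -- the precise representative agrees a.e. with u off the jump set
  have hprec : (fun x => u.prec x) =ᵐ[volume.restrict (Ω \ S)] u.toFun := by
    set NN := {x | x ∈ Ω \ S ∧ ¬ IsLebPoint u.toFun x (u.prec x)} with hNN
    have hN1 : μH[1] NN = 0 := by
      have := u.prec_leb
      norm_num at this
      exact this
    have hNv : volume NN = 0 := vol_null_of_H1 hN1
    have h1 : ∀ᵐ x ∂volume.restrict (Ω \ S), IsLebPoint u.toFun x (u.toFun x) :=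
      ae_restrict_of_ae_restrict_of_subset diff_subset (ae_lebPoint hΩo u.integrable)
    have h2 : ∀ᵐ x ∂volume.restrict (Ω \ S), x ∉ NN := by
      refine ae_restrict_of_ae ?_
      have hset : {x | ¬ x ∉ NN} = NN := by ext x; simp
      rw [ae_iff, hset]
      exact hNv
    have h3 := ae_restrict_mem (μ := volume) (hΩm.diff hSm)
    filter_upwards [h1, h2, h3] with x hx1 hx2 hx3
    have hlp : IsLebPoint u.toFun x (u.prec x) := by
      by_contra hc
      exact hx2 ⟨hx3, hc⟩
    exact leb_unique hΩo hx3.1 u.integrable hlp hx1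
  -- density vanishes a.e. on the jump set
  have hρS : ∀ i j, ρ i j =ᵐ[volume.restrict S] 0 := by
    intro i j
    have htv := u.dd_off_jump i j
    rw [SignedMeasure.totalVariation, Measure.add_apply, hDdeq i j] at htv
    obtain ⟨hpos, hneg⟩ := jordan_wd (hρm i j) (hρi i j)
    rw [hpos, hneg, withDensity_apply _ hSm, withDensity_apply _ hSm] at htv
    obtain ⟨h1, h2⟩ := add_eq_zero.mp htv
    rw [lintegral_eq_zero_iff ((hρm i j).ennreal_ofReal)] at h1
    have hm' : Measurable fun x => ENNReal.ofReal (-ρ i j x) := (hρm i j).neg.ennreal_ofReal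
    rw [lintegral_eq_zero_iff hm'] at h2
    filter_upwards [h1, h2] with x hx1 hx2
    simp only [Pi.zero_apply, ENNReal.ofReal_eq_zero] at hx1 hx2 ⊢
    linarith
  -- integrability of the products via Hölder
  have hInt : ∀ (hh i j : Fin 2) (ψ : Euc 2 → ℝ), Continuous ψ → (∃ C, ∀ x, |ψ x| ≤ C) →
      Integrable (fun x => ψ x * (u.toFun x hh * g i j x)) (volume.restrict Ω) := by
    intro hh i j ψ hψc hψb
    have huh : MemLp (fun x => u.toFun x hh) p (volume.restrict Ω) := by
      refine MemLp.of_le hLp ?_ ?_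
      · exact ((EuclideanSpace.proj hh : Euc 2 →L[ℝ] ℝ).continuous).comp_aestronglyMeasurable
          hLp.1
      · filter_upwards with x
        rw [Real.norm_eq_abs]
        calc |u.toFun x hh| = Real.sqrt (‖u.toFun x hh‖ ^ 2) := by
              rw [Real.sqrt_sq_eq_abs, Real.norm_eq_abs, abs_abs]
          _ ≤ Real.sqrt (∑ i, ‖u.toFun x i‖ ^ 2) := Real.sqrt_le_sqrt
              (Finset.single_le_sum (f := fun i => ‖u.toFun x i‖ ^ 2) (fun i _ => sq_nonneg _) (Finset.mem_univ hh))
          _ = ‖u.toFun x‖ := (EuclideanSpace.norm_eq _).symm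
    have hmul : MemLp ((fun x => u.toFun x hh) • (g i j)) 1 (volume.restrict Ω) := by
      refine MemLp.smul (hgq i j) huh (hpqr := ⟨?_⟩)
      simpa [one_div] using hpq
    have hint : Integrable (fun x => u.toFun x hh * g i j x) (volume.restrict Ω) := by
      have := memLp_one_iff_integrable.mp hmul
      exact this
    obtain ⟨C, hC⟩ := hψb
    refine hint.bdd_mul (c := C) (hψc.aestronglyMeasurable) ?_
    exact Eventually.of_forall fun x => by simpa [Real.norm_eq_abs] using hC x
  -- sInt of the zero measure vanishes
  have hz : ∀ (A : Set (Euc 2)) (f : Euc 2 → ℝ), sInt (0 : SignedMeasure (Euc 2)) A f = 0 := by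
    intro A f
    rw [sInt, SignedMeasure.toJordanDecomposition_zero]
    simp [JordanDecomposition.zero_posPart, JordanDecomposition.zero_negPart]
  -- main computation of nuInt
  have hnu : ∀ (i hh j : Fin 2) (ψ : Euc 2 → ℝ), Continuous ψ → (∃ C, ∀ x, |ψ x| ≤ C) →
      nuInt u i hh j ψ = ∫ x in Ω, ψ x * (u.toFun x hh * g i j x) ∂volume := by
    intro i hh j ψ hψc hψb
    have hmono : volume.restrict (Ω \ S) ≤ volume.restrict Ω :=
      Measure.restrict_mono diff_subset le_rfl
    have hae_g : ∀ᵐ x ∂volume.restrict (Ω \ S), ρ i j x = g i j x := by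
      filter_upwards [ae_restrict_mem (hΩm.diff hSm)] with x hx
      exact Set.indicator_of_mem hx.1 _
    have htgt : Integrable (fun x => ψ x * (u.toFun x hh * g i j x))
        (volume.restrict (Ω \ S)) := (hInt hh i j ψ hψc hψb).mono_measure hmono
    have hfm : AEStronglyMeasurable (fun x => ψ x * u.prec x hh)
        (volume.restrict (Ω \ S)) := by
      have base : AEStronglyMeasurable (fun x => ψ x * u.toFun x hh)
          (volume.restrict (Ω \ S)) :=
        (hψc.aestronglyMeasurable.mono_measure hmono).mul
          (((EuclideanSpace.proj hh : Euc 2 →L[ℝ] ℝ).continuous).comp_aestronglyMeasurable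
            (hLp.1.mono_measure hmono))
      refine base.congr ?_
      filter_upwards [hprec] with x hx
      rw [hx]
    have hfi : Integrable (fun x => (ψ x * u.prec x hh) * ρ i j x)
        (volume.restrict (Ω \ S)) := by
      refine htgt.congr ?_
      filter_upwards [hprec, hae_g] with x hx1 hx2
      rw [hx1, hx2]
      ring
    have hfirst : sInt (u.Dd i j) (Ω \ S) (fun x => ψ x * u.prec x hh)
        = ∫ x in Ω \ S, ψ x * (u.toFun x hh * g i j x) ∂volume := by
      rw [hDdeq i j, sInt_wd (hρm i j) (hρi i j) (hΩm.diff hSm) hfm hfi]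
      refine integral_congr_ae ?_
      filter_upwards [hprec, hae_g] with x hx1 hx2
      rw [hx1, hx2]
      ring
    have hsecond : sInt (u.Ds i j) S (fun x => ψ x * u.prec x hh) = 0 := by
      rw [hnojump i j]
      exact hz _ _
    have hsplit : ∫ x in Ω, ψ x * (u.toFun x hh * g i j x) ∂volume
        = (∫ x in Ω \ S, ψ x * (u.toFun x hh * g i j x) ∂volume)
          + ∫ x in Ω ∩ S, ψ x * (u.toFun x hh * g i j x) ∂volume := by
      rw [← setIntegral_union Set.disjoint_sdiff_inter (hΩm.inter hSm)
        ((hInt hh i j ψ hψc hψb).mono_measure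
          (Measure.restrict_mono diff_subset le_rfl))
        ((hInt hh i j ψ hψc hψb).mono_measure
          (Measure.restrict_mono inter_subset_left le_rfl)), Set.diff_union_inter]
    have hzero : ∫ x in Ω ∩ S, ψ x * (u.toFun x hh * g i j x) ∂volume = 0 := by
      have hcap : ρ i j =ᵐ[volume.restrict (Ω ∩ S)] 0 :=
        ae_restrict_of_ae_restrict_of_subset inter_subset_right (hρS i j)
      have hgz : ∀ᵐ x ∂volume.restrict (Ω ∩ S), g i j x = 0 := by
        filter_upwards [hcap, ae_restrict_mem (hΩm.inter hSm)] with x hx1 hx2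
        rw [← Set.indicator_of_mem hx2.1 (g i j)]
        exact hx1
      rw [← integral_zero (Euc 2) ℝ]
      refine integral_congr_ae ?_
      filter_upwards [hgz] with x hx
      rw [hx]
      ring
    rw [nuInt, hfirst, hsecond, add_zero, hsplit, hzero, add_zero]
  -- final assembly
  have hA := hInt 0 1 0 (pd φ 1) (hpdc 1) (hpdb 1)
  have hB := hInt 1 0 0 (pd φ 1) (hpdc 1) (hpdb 1)
  have hC := hInt 0 0 1 (pd φ 0) (hpdc 0) (hpdb 0)
  have hD := hInt 1 0 1 (pd φ 0) (hpdc 0) (hpdb 0)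
  rw [Jint, lamInt, lamInt,
    hnu 1 0 0 (pd φ 1) (hpdc 1) (hpdb 1), hnu 0 1 0 (pd φ 1) (hpdc 1) (hpdb 1),
    hnu 1 0 1 (pd φ 0) (hpdc 0) (hpdb 0), hnu 0 1 1 (pd φ 0) (hpdc 0) (hpdb 0)]
  have hC' := hInt 0 1 1 (pd φ 0) (hpdc 0) (hpdb 0)
  have hD' := hInt 1 0 1 (pd φ 0) (hpdc 0) (hpdb 0)
  have e1 : ∫ x in Ω, (lamF u.toFun g 0 x * pd φ 0 x + lamF u.toFun g 1 x * pd φ 1 x) ∂volume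
      = ∫ x in Ω, ((2:ℝ)⁻¹ * (pd φ 1 x * (u.toFun x 0 * g 1 0 x)
          - pd φ 1 x * (u.toFun x 1 * g 0 0 x))
        - (2:ℝ)⁻¹ * (pd φ 0 x * (u.toFun x 0 * g 1 1 x)
          - pd φ 0 x * (u.toFun x 1 * g 0 1 x))) ∂volume := by
    refine integral_congr_ae (Eventually.of_forall fun x => ?_)
    simp only [lamF, if_pos rfl, if_neg (by decide : ¬ (1 : Fin 2) = 0), eq_self_iff_true, if_true]
    ring
  have h1 : Integrable (fun x => (2:ℝ)⁻¹ * (pd φ 1 x * (u.toFun x 0 * g 1 0 x)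
      - pd φ 1 x * (u.toFun x 1 * g 0 0 x))) (volume.restrict Ω) := (hA.sub hB).const_mul _
  have h2 : Integrable (fun x => (2:ℝ)⁻¹ * (pd φ 0 x * (u.toFun x 0 * g 1 1 x)
      - pd φ 0 x * (u.toFun x 1 * g 0 1 x))) (volume.restrict Ω) := (hC'.sub hD').const_mul _
  rw [e1, integral_sub h1 h2, integral_const_mul, integral_const_mul,
    integral_sub hA hB, integral_sub hC' hD']


end
end

section
/- Let Ω ⊂ ℝⁿ be open and bounded and u ∈ L^p(Ω;ℝ^m) ∩ W^{1,q}(Ω;ℝ^m) with 1/p + 1/q = 1 (including p = ∞, q = 1). Then u satisfies property (P) for every choice of indices, and for all i,i' ∈ {1,…,m}, j ∈ {1,…,n}: ∫_{Ω×ℝ^m} φ(x,y) y^i d(μ_u)^{i'}_j = ∫_Ω φ(x,u(x)) u^i(x) ∂u^{i'}/∂x_j (x) dx for all φ ∈ C_c(Ω×ℝ^m), and ∫_Ω φ(x) d(ν_u)^{i',i}_j = ∫_Ω φ(x) u^i(x) ∂u^{i'}/∂x_j (x) dx for all φ ∈ C_c(Ω). In particular, the measure (ν_u)^{i',i}_j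 is absolutely continuous with respect to Lebesgue measure and coincides almost everywhere with the L¹ function u^i ∂u^{i'}/∂x_j. -/
open MeasureTheory Topology Filter Metric Set
open scoped ENNReal NNReal Classical

noncomputable section

/-! ### Auxiliary lemmas for the proof of `stmt6_sobolev_case` -/

section AuxLemmas

/-- Value of a signed measure via its Jordan decomposition. -/
theorem auxApply {α : Type*} [MeasurableSpace α] (s : MeasureTheory.SignedMeasure α)
    {E : Set α} (hE : MeasurableSet E) :
    s E = (s.toJordanDecomposition.posPart E).toReal -
      (s.toJordanDecomposition.negPart E).toReal := by
  conv_lhs => rw [← s.toSignedMeasure_toJordanDecomposition]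
  rw [MeasureTheory.JordanDecomposition.toSignedMeasure,
    MeasureTheory.VectorMeasure.sub_apply,
    MeasureTheory.Measure.toSignedMeasure_apply_measurable hE,
    MeasureTheory.Measure.toSignedMeasure_apply_measurable hE, measureReal_def, measureReal_def]

/-- An `H^{n-1}`-null subset of `ℝⁿ` is Lebesgue-null. -/
theorem auxVolNull {n : ℕ} (s : Set (Euc n)) (h : μH[(n : ℝ) - 1] s = 0) :
    volume s = 0 := by
  have hlt : (n : ℝ) - 1 < (n : ℝ) := by linarith
  have hn2 : μH[(n : ℝ)] s = 0 := by
    rcases Measure.hausdorffMeasure_zero_or_top hlt s with h0 | htop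
    · exact h0
    · rw [h] at htop; exact absurd htop (by simp)
  -- transfer to the sup-norm pi space
  set e := (MeasurableEquiv.toLp 2 (Fin n → ℝ)).symm
  have hmp := EuclideanSpace.volume_preserving_symm_measurableEquiv_toLp (Fin n)
  have hvol : volume s = volume (⇑e '' s) := by
    have : volume (⇑e '' s) = volume (⇑e ⁻¹' (⇑e '' s)) := by
      rw [← hmp.map_eq, MeasurableEquiv.map_apply]
    rw [this, Set.preimage_image_eq _ e.injective]
  rw [hvol, ← MeasureTheory.hausdorffMeasure_pi_real (ι := Fin n)]
  have hlip : LipschitzWith 1 (⇑e) := by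
    have := PiLp.lipschitzWith_ofLp 2 (fun _ : Fin n => ℝ)
    exact this
  have hbound := hlip.hausdorffMeasure_image_le (d := (n : ℝ)) (n.cast_nonneg) s
  rw [hn2] at hbound
  simp only [Fintype.card_fin]
  exact le_antisymm (by simpa using hbound) zero_le

/-- Almost every point of an open set is a Lebesgue point of an integrable function. -/
theorem auxAELeb {n m : ℕ} {Ω : Set (Euc n)} (hΩo : IsOpen Ω)
    {u : Euc n → Euc m} (hu : IntegrableOn u Ω volume) :
    ∀ᵐ x ∂(volume.restrict Ω), IsLebPoint u x (u x) := by
  set w : Euc n → Euc m := Ω.indicator u with hw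
  have hwint : Integrable w volume :=
    (integrable_indicator_iff hΩo.measurableSet).2 hu
  have hbes := IsUnifLocDoublingMeasure.ae_tendsto_average_norm_sub (μ := volume)
    hwint.locallyIntegrable 1
  filter_upwards [ae_restrict_of_ae hbes, ae_restrict_mem hΩo.measurableSet] with x hx hxΩ
  have hx' : Tendsto (fun r : ℝ => ⨍ y in closedBall x r, ‖w y - w x‖ ∂volume)
      (𝓝[>] 0) (𝓝 0) := by
    refine hx (fun _ => x) id tendsto_id ?_
    filter_upwards [self_mem_nhdsWithin] with r hr
    exact Metric.mem_closedBall_self (by rw [one_mul]; exact le_of_lt hr)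
  obtain ⟨ε, hε, hball⟩ := Metric.isOpen_iff.1 hΩo x hxΩ
  rw [IsLebPoint]
  refine hx'.congr' ?_
  filter_upwards [Ioo_mem_nhdsGT_of_mem (Set.left_mem_Ico.2 (half_pos hε))] with r hr
  have hsub : closedBall x r ⊆ Ω := fun y hy =>
    hball (lt_of_le_of_lt (mem_closedBall.1 hy) (lt_of_lt_of_le hr.2 (by linarith)))
  have h1 : (⨍ y in closedBall x r, ‖w y - w x‖ ∂volume)
      = ⨍ y in closedBall x r, ‖u y - u x‖ ∂volume := by
    rw [setAverage_eq, setAverage_eq]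
    congr 1
    refine setIntegral_congr_fun measurableSet_closedBall (fun y hy => ?_)
    rw [hw, Set.indicator_of_mem (hsub hy), Set.indicator_of_mem hxΩ]
  have h2 : volume.restrict (ball x r) = volume.restrict (closedBall x r) := by
    refine Measure.restrict_congr_set ?_
    have hsph : volume (closedBall x r \ ball x r) = 0 := by
      rw [closedBall_diff_ball]
      exact Measure.addHaar_sphere_of_ne_zero volume x (ne_of_gt hr.1)
    refine MeasureTheory.ae_eq_set.2 ⟨?_, hsph⟩
    rw [Set.diff_eq_empty.2 ball_subset_closedBall]; simp
  rw [h1, setAverage_eq, setAverage_eq, ← h2,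
    show volume.real (closedBall x r) = volume.real (ball x r) from
      congrArg ENNReal.toReal (measure_congr (by
        refine MeasureTheory.ae_eq_set.2 ⟨?_, ?_⟩
        · rw [Set.diff_eq_empty.2 ball_subset_closedBall]; simp
        · rw [closedBall_diff_ball]
          exact Measure.addHaar_sphere_of_ne_zero volume x (ne_of_gt hr.1))).symm]

/-- Uniqueness of Lebesgue values. -/
theorem auxLebUnique {n m : ℕ} {u : Euc n → Euc m} {x : Euc n} {y z : Euc m}
    (hI : ∀ᶠ r in 𝓝[>] (0 : ℝ), IntegrableOn u (ball x r) volume)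
    (hy : IsLebPoint u x y) (hz : IsLebPoint u x z) : y = z := by
  have hkey : ∀ᶠ r in 𝓝[>] (0 : ℝ), ‖y - z‖ ≤
      (⨍ w in ball x r, ‖u w - y‖ ∂volume) + ⨍ w in ball x r, ‖u w - z‖ ∂volume := by
    filter_upwards [hI, self_mem_nhdsWithin] with r hint hr
    have hr' : (0 : ℝ) < r := hr
    have hvpos : 0 < volume (ball x r) := measure_ball_pos volume x hr'
    have hvlt : volume (ball x r) < ⊤ := measure_ball_lt_top
    have hvne : (volume (ball x r)).toReal ≠ 0 := by
      simp [ENNReal.toReal_eq_zero_iff, ne_of_gt hvpos, ne_of_lt hvlt]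
    have hvnn : (0 : ℝ) < (volume (ball x r)).toReal :=
      lt_of_le_of_ne ENNReal.toReal_nonneg (Ne.symm hvne)
    have hIy : IntegrableOn (fun w => ‖u w - y‖) (ball x r) volume :=
      (hint.sub (integrableOn_const hvlt.ne)).norm
    have hIz : IntegrableOn (fun w => ‖u w - z‖) (ball x r) volume :=
      (hint.sub (integrableOn_const hvlt.ne)).norm
    have hmono : (volume (ball x r)).toReal * ‖y - z‖ ≤
        (∫ w in ball x r, ‖u w - y‖ ∂volume) + ∫ w in ball x r, ‖u w - z‖ ∂volume := by
      have := setIntegral_mono_on (integrableOn_const (C := ‖y - z‖) hvlt.ne) (hIy.add hIz)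
        measurableSet_ball (fun w _ => by
          calc ‖y - z‖ ≤ ‖y - u w‖ + ‖u w - z‖ := norm_sub_le_norm_sub_add_norm_sub y (u w) z
          _ = ‖u w - y‖ + ‖u w - z‖ := by rw [norm_sub_rev])
      rw [setIntegral_const, smul_eq_mul] at this
      simp only [Pi.add_apply] at this
      rw [integral_add hIy hIz] at this; exact this
    rw [setAverage_eq, setAverage_eq, smul_eq_mul, smul_eq_mul, ← mul_add]
    calc ‖y - z‖ = (volume (ball x r)).toReal⁻¹ *
        ((volume (ball x r)).toReal * ‖y - z‖) := by field_simp
      _ ≤ (volume (ball x r)).toReal⁻¹ *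
          ((∫ w in ball x r, ‖u w - y‖ ∂volume) + ∫ w in ball x r, ‖u w - z‖ ∂volume) :=
        mul_le_mul_of_nonneg_left hmono (inv_nonneg.2 ENNReal.toReal_nonneg)
  have hlim : Tendsto (fun r : ℝ =>
      (⨍ w in ball x r, ‖u w - y‖ ∂volume) + ⨍ w in ball x r, ‖u w - z‖ ∂volume)
      (𝓝[>] 0) (𝓝 0) := by
    simpa using hy.add hz
  have : ‖y - z‖ ≤ 0 := ge_of_tendsto hlim hkey
  have : ‖y - z‖ = 0 := le_antisymm this (norm_nonneg _)
  rwa [norm_eq_zero, sub_eq_zero] at this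

/-- Difference of integrals against the positive/negative density parts. -/
theorem auxPairInt {α : Type*} [MeasurableSpace α] (ρ : Measure α) (h : α → ℝ)
    (hm : Measurable h) (f : α → ℝ) (hf : AEStronglyMeasurable f ρ)
    (hint : Integrable (fun x => f x * h x) ρ) :
    (∫ x, f x ∂(ρ.withDensity fun x => ((h x).toNNReal : ℝ≥0∞))) -
      (∫ x, f x ∂(ρ.withDensity fun x => (((-h x).toNNReal : ℝ≥0) : ℝ≥0∞))) =
      ∫ x, f x * h x ∂ρ := by
  rw [integral_withDensity_eq_integral_smul hm.real_toNNReal f,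
    integral_withDensity_eq_integral_smul (f := fun x => (-h x).toNNReal) (hm.neg.real_toNNReal) f]
  simp only [NNReal.smul_def, Real.coe_toNNReal', smul_eq_mul]
  have hIy : Integrable (fun x => max (h x) 0 * f x) ρ := by
    refine Integrable.mono' hint.abs
      (((hm.max measurable_const).aestronglyMeasurable.mul hf)) ?_
    filter_upwards with x
    have h1 : |max (h x) 0| ≤ |h x| := by
      rw [abs_of_nonneg (le_max_right _ _)]
      exact max_le (le_abs_self _) (abs_nonneg _)
    calc ‖max (h x) 0 * f x‖ = |max (h x) 0| * |f x| := by rw [Real.norm_eq_abs, abs_mul]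
      _ ≤ |h x| * |f x| := mul_le_mul_of_nonneg_right h1 (abs_nonneg _)
      _ = |f x * h x| := by rw [abs_mul, mul_comm]
  have hIz : Integrable (fun x => max (-h x) 0 * f x) ρ := by
    refine Integrable.mono' hint.abs
      (((hm.neg.max measurable_const).aestronglyMeasurable.mul hf)) ?_
    filter_upwards with x
    have h1 : |max (-h x) 0| ≤ |h x| := by
      rw [abs_of_nonneg (le_max_right _ _), ← abs_neg (h x)]
      exact max_le (le_abs_self _) (abs_nonneg _)
    calc ‖max (-h x) 0 * f x‖ = |max (-h x) 0| * |f x| := by rw [Real.norm_eq_abs, abs_mul]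
      _ ≤ |h x| * |f x| := mul_le_mul_of_nonneg_right h1 (abs_nonneg _)
      _ = |f x * h x| := by rw [abs_mul, mul_comm]
  rw [← integral_sub hIy hIz]
  refine integral_congr_ae (Filter.Eventually.of_forall fun x => ?_)
  show (max (h x) 0) * f x - (max (-h x) 0) * f x = f x * h x
  rw [← sub_mul, max_zero_sub_max_neg_zero_eq_self, mul_comm]

section AuxEuc

variable {n m : ℕ} {Ω : Set (Euc n)}

/-- The Jordan decomposition of the diffuse derivative of a Sobolev function. -/
theorem auxJordan (u : BVFun n m Ω) (g : Fin m → Fin n → Euc n → ℝ)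
    (hW : IsApproxGrad u g) (i : Fin m) (j : Fin n) :
    (u.Dd i j).toJordanDecomposition.posPart =
        (volume.restrict Ω).withDensity (fun x => (((g i j x).toNNReal : ℝ≥0) : ℝ≥0∞)) ∧
      (u.Dd i j).toJordanDecomposition.negPart =
        (volume.restrict Ω).withDensity (fun x => (((-g i j x).toNNReal : ℝ≥0) : ℝ≥0∞)) := by
  obtain ⟨hgm, hgint, hgden⟩ := hW
  set h : Euc n → ℝ := g i j with hh
  set P : Measure (Euc n) :=
    (volume.restrict Ω).withDensity (fun x => (((h x).toNNReal : ℝ≥0) : ℝ≥0∞)) with hPdef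
  set N : Measure (Euc n) :=
    (volume.restrict Ω).withDensity (fun x => (((-h x).toNNReal : ℝ≥0) : ℝ≥0∞)) with hNdef
  have hInt : Integrable h (volume.restrict Ω) := hgint i j
  have hhm : Measurable h := hgm i j
  have hfin : ∀ w : Euc n → ℝ, (∀ᵐ x ∂(volume.restrict Ω),
      ((w x).toNNReal : ℝ≥0∞) ≤ ((‖h x‖₊ : ℝ≥0) : ℝ≥0∞)) →
      IsFiniteMeasure ((volume.restrict Ω).withDensity
        (fun x => (((w x).toNNReal : ℝ≥0) : ℝ≥0∞))) := by
    intro w hle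
    refine isFiniteMeasure_withDensity (ne_of_lt (lt_of_le_of_lt (lintegral_mono_ae hle) ?_))
    exact hInt.2
  haveI hPfin : IsFiniteMeasure P := by
    refine hfin h ?_
    filter_upwards with x
    rw [show ((‖h x‖₊ : ℝ≥0) : ℝ≥0∞) = ENNReal.ofReal |h x| from Real.enorm_eq_ofReal_abs _]
    exact ENNReal.ofReal_le_ofReal (le_abs_self _)
  haveI hNfin : IsFiniteMeasure N := by
    refine hfin (fun x => -h x) ?_
    filter_upwards with x
    rw [show ((‖h x‖₊ : ℝ≥0) : ℝ≥0∞) = ENNReal.ofReal |h x| from Real.enorm_eq_ofReal_abs _]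
    exact ENNReal.ofReal_le_ofReal (by rw [← abs_neg]; exact le_abs_self _)
  have hsing : P ⟂ₘ N := by
    refine ⟨{x | h x ≤ 0}, measurableSet_le hhm measurable_const, ?_, ?_⟩
    · rw [hPdef, withDensity_apply _ (measurableSet_le hhm measurable_const)]
      rw [show (0 : ℝ≥0∞) = ∫⁻ x in {x | h x ≤ 0}, 0 ∂(volume.restrict Ω) by simp]
      refine setLIntegral_congr_fun (measurableSet_le hhm measurable_const)
        (fun x hx => ?_)
      simp [Real.toNNReal_eq_zero.2 hx]
    · rw [hNdef, withDensity_apply _ (measurableSet_le hhm measurable_const).compl]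
      rw [show (0 : ℝ≥0∞) = ∫⁻ x in {x | h x ≤ 0}ᶜ, 0 ∂(volume.restrict Ω) by simp]
      refine setLIntegral_congr_fun (measurableSet_le hhm measurable_const).compl
        (fun x hx => ?_)
      have : ¬ h x ≤ 0 := hx
      simp [Real.toNNReal_eq_zero.2 (by linarith : -h x ≤ 0)]
  set J : MeasureTheory.JordanDecomposition (Euc n) :=
    @MeasureTheory.JordanDecomposition.mk (Euc n) _ P N hPfin hNfin hsing with hJ
  have hsm : u.Dd i j = J.toSignedMeasure := by
    refine MeasureTheory.VectorMeasure.ext fun A hA => ?_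
    rw [MeasureTheory.JordanDecomposition.toSignedMeasure]
    rw [MeasureTheory.VectorMeasure.sub_apply,
      Measure.toSignedMeasure_apply_measurable hA,
      Measure.toSignedMeasure_apply_measurable hA]
    have hIA : Integrable h (volume.restrict (A ∩ Ω)) :=
      hInt.mono_measure (by
        rw [← Measure.restrict_restrict hA]
        exact Measure.restrict_le_self)
    have hPA : (J.posPart : Measure (Euc n)) A =
        ∫⁻ x, ENNReal.ofReal (h x) ∂(volume.restrict (A ∩ Ω)) := by
      show P A = _
      rw [hPdef, withDensity_apply _ hA, Measure.restrict_restrict hA]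
      rfl
    have hNA : (J.negPart : Measure (Euc n)) A =
        ∫⁻ x, ENNReal.ofReal (-h x) ∂(volume.restrict (A ∩ Ω)) := by
      show N A = _
      rw [hNdef, withDensity_apply _ hA, Measure.restrict_restrict hA]
      rfl
    rw [measureReal_def, measureReal_def, hPA, hNA, hgden i j A hA,
      ← MeasureTheory.integral_eq_lintegral_pos_part_sub_lintegral_neg_part hIA]
  constructor
  · rw [hsm, MeasureTheory.JordanDecomposition.toJordanDecomposition_toSignedMeasure]
  · rw [hsm, MeasureTheory.JordanDecomposition.toJordanDecomposition_toSignedMeasure]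

/-- Main computation: the action of the diffuse derivative on `Ω \ S_u`. -/
theorem auxSIntDd (hΩo : IsOpen Ω)
    (u : BVFun n m Ω) (g : Fin m → Fin n → Euc n → ℝ) (hW : IsApproxGrad u g)
    (i : Fin m) (j : Fin n) (f f' : Euc n → ℝ)
    (hae : ∀ᵐ x ∂(volume.restrict Ω), x ∉ u.jumpSet → f x = f' x)
    (hf' : AEStronglyMeasurable f' (volume.restrict Ω))
    (hint : Integrable (fun x => f' x * g i j x) (volume.restrict Ω)) :
    sInt (u.Dd i j) (Ω \ u.jumpSet) f = ∫ x in Ω, f' x * g i j x ∂volume := by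
  obtain ⟨hP, hN⟩ := auxJordan u g hW i j
  set ρ := volume.restrict Ω with hρ
  set h := g i j with hh
  have hhm : Measurable h := hW.1 i j
  set P : Measure (Euc n) := ρ.withDensity (fun x => (((h x).toNNReal : ℝ≥0) : ℝ≥0∞)) with hPd
  set N : Measure (Euc n) := ρ.withDensity (fun x => (((-h x).toNNReal : ℝ≥0) : ℝ≥0∞)) with hNd
  have hoffΩ : ∀ w : Euc n → ℝ≥0∞, ρ.withDensity w Ωᶜ = 0 := by
    intro w
    rw [withDensity_apply _ hΩo.measurableSet.compl, hρ,
      Measure.restrict_restrict hΩo.measurableSet.compl, Set.compl_inter_self,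
      Measure.restrict_empty, lintegral_zero_measure]
  have htv' : P u.jumpSet + N u.jumpSet = 0 := by
    have htveq : (u.Dd i j).totalVariation = P + N := by
      show (u.Dd i j).toJordanDecomposition.posPart +
        (u.Dd i j).toJordanDecomposition.negPart = P + N
      rw [hP, hN]
    rw [← Measure.add_apply, ← htveq, u.dd_off_jump i j]
  have hPS : P u.jumpSet = 0 :=
    le_antisymm (htv' ▸ le_self_add) zero_le
  have hNS : N u.jumpSet = 0 :=
    le_antisymm (htv' ▸ le_add_self) zero_le
  have hmem : ∀ Q : Measure (Euc n), Q Ωᶜ = 0 → Q u.jumpSet = 0 →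
      Q.restrict (Ω \ u.jumpSet) = Q := by
    intro Q h1 h2
    refine Measure.restrict_eq_self_of_ae_mem ?_
    rw [MeasureTheory.ae_iff]
    refine measure_mono_null (fun x hx => ?_)
      (le_antisymm (le_trans (measure_union_le Ωᶜ u.jumpSet) (by rw [h1, h2]; simp))
        zero_le)
    simp only [Set.mem_setOf_eq, Set.mem_diff, not_and, not_not] at hx
    by_cases hxΩ : x ∈ Ω
    · exact Or.inr (hx hxΩ)
    · exact Or.inl hxΩ
  have hfae : ∀ Q : Measure (Euc n), Q ≪ ρ → Q u.jumpSet = 0 → f =ᵐ[Q] f' := by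
    intro Q hac h2
    have h3 : ∀ᵐ x ∂Q, x ∉ u.jumpSet := by
      rw [MeasureTheory.ae_iff]
      simpa using h2
    filter_upwards [hae.filter_mono hac.ae_le, h3] with x hx hxS
    exact hx hxS
  have hPres : P.restrict (Ω \ u.jumpSet) = P := hmem P (hoffΩ _) hPS
  have hNres : N.restrict (Ω \ u.jumpSet) = N := hmem N (hoffΩ _) hNS
  rw [sInt, hP, hN, hPres, hNres,
    integral_congr_ae (hfae P (hPd ▸ withDensity_absolutelyContinuous ρ _) hPS),
    integral_congr_ae (hfae N (hNd ▸ withDensity_absolutelyContinuous ρ _) hNS)]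
  exact auxPairInt ρ h hhm f' hf' hint

end AuxEuc

/-- Compactly supported continuous cutoffs exhausting an open set. -/
theorem auxCutoff {E : Type*} [NormedAddCommGroup E] [NormedSpace ℝ E] [ProperSpace E]
    {U : Set E} (hU : IsOpen U) (hne : Uᶜ.Nonempty) :
    ∃ χ : ℕ → E → ℝ, (∀ k, Continuous (χ k)) ∧ (∀ k z, 0 ≤ χ k z) ∧ (∀ k z, χ k z ≤ 1) ∧
      (∀ k, HasCompactSupport (χ k)) ∧ (∀ k, tsupport (χ k) ⊆ U) ∧
      ∀ z ∈ U, Tendsto (fun k => χ k z) atTop (𝓝 1) := by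
  set d : E → ℝ := fun z => Metric.infDist z Uᶜ with hd
  have hdc : Continuous d := continuous_infDist_pt Uᶜ
  set χ : ℕ → E → ℝ := fun k z =>
    max (min 1 ((k : ℝ) * d z - 1)) 0 * max (min 1 ((k : ℝ) + 1 - ‖z‖)) 0 with hχ
  have hcont : ∀ k, Continuous (χ k) := fun k =>
    ((continuous_const.min ((continuous_const.mul hdc).sub continuous_const)).max
      continuous_const).mul
      ((continuous_const.min ((continuous_const.sub continuous_norm))).max continuous_const)
  have hnonneg : ∀ k z, 0 ≤ χ k z := fun k z =>
    mul_nonneg (le_max_right _ _) (le_max_right _ _)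
  have hle1 : ∀ k z, χ k z ≤ 1 := by
    intro k z
    have h1 : max (min 1 ((k : ℝ) * d z - 1)) 0 ≤ 1 :=
      max_le (min_le_left _ _) zero_le_one
    have h2 : max (min 1 ((k : ℝ) + 1 - ‖z‖)) 0 ≤ 1 :=
      max_le (min_le_left _ _) zero_le_one
    calc χ k z ≤ 1 * 1 :=
        mul_le_mul h1 h2 (le_max_right _ _) zero_le_one
      _ = 1 := one_mul 1
  have hsupp : ∀ k, Function.support (χ k) ⊆
      {z | 1 ≤ (k : ℝ) * d z} ∩ Metric.closedBall 0 ((k : ℝ) + 1) := by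
    intro k z hz
    constructor
    · simp only [Set.mem_setOf_eq]
      by_contra h1
      rw [not_le] at h1
      refine hz ?_
      have hmax : max (min 1 ((k : ℝ) * d z - 1)) 0 = 0 :=
        max_eq_right (le_of_lt (lt_of_le_of_lt (min_le_right _ _) (by linarith)))
      show max (min 1 ((k : ℝ) * d z - 1)) 0 * max (min 1 ((k : ℝ) + 1 - ‖z‖)) 0 = 0
      rw [hmax, zero_mul]
    · rw [Metric.mem_closedBall, dist_zero_right]
      by_contra h1
      rw [not_le] at h1
      refine hz ?_
      have hmax : max (min 1 ((k : ℝ) + 1 - ‖z‖)) 0 = 0 :=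
        max_eq_right (le_of_lt (lt_of_le_of_lt (min_le_right _ _) (by linarith)))
      show max (min 1 ((k : ℝ) * d z - 1)) 0 * max (min 1 ((k : ℝ) + 1 - ‖z‖)) 0 = 0
      rw [hmax, mul_zero]
  have hCclosed : ∀ k : ℕ, IsClosed ({z : E | 1 ≤ (k : ℝ) * d z} ∩
      Metric.closedBall 0 ((k : ℝ) + 1)) := fun k =>
    (isClosed_le continuous_const (continuous_const.mul hdc)).inter
      Metric.isClosed_closedBall
  have hts : ∀ k, tsupport (χ k) ⊆ {z | 1 ≤ (k : ℝ) * d z} ∩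
      Metric.closedBall 0 ((k : ℝ) + 1) := fun k =>
    closure_minimal (hsupp k) (hCclosed k)
  have hCU : ∀ k : ℕ, ({z : E | 1 ≤ (k : ℝ) * d z} ∩
      Metric.closedBall 0 ((k : ℝ) + 1)) ⊆ U := by
    intro k z hzC
    have h1 : (1 : ℝ) ≤ (k : ℝ) * d z := hzC.1
    have hdz : 0 < d z := by
      by_contra hc
      push_neg at hc
      have : (k : ℝ) * d z ≤ 0 := mul_nonpos_of_nonneg_of_nonpos (Nat.cast_nonneg k) hc
      linarith
    by_contra hzU
    have : d z = 0 := (IsClosed.mem_iff_infDist_zero hU.isClosed_compl hne).1 hzU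
    rw [this] at hdz; exact lt_irrefl 0 hdz
  refine ⟨χ, hcont, hnonneg, hle1, ?_, fun k => (hts k).trans (hCU k), ?_⟩
  · intro k
    exact IsCompact.of_isClosed_subset (isCompact_closedBall 0 ((k : ℝ) + 1))
      isClosed_closure ((hts k).trans Set.inter_subset_right)
  · intro z hz
    have hdz : 0 < d z := by
      rcases lt_or_eq_of_le (Metric.infDist_nonneg (x := z) (s := Uᶜ)) with hlt | heq
      · exact hlt
      · exfalso
        exact (by simpa using hz : z ∉ Uᶜ)
          ((IsClosed.mem_iff_infDist_zero hU.isClosed_compl hne).2 heq.symm)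
    obtain ⟨K, hK⟩ := exists_nat_ge (2 / d z + ‖z‖)
    have hconst : ∀ k ≥ K, χ k z = 1 := by
      intro k hk
      have hkk : 2 / d z + ‖z‖ ≤ (k : ℝ) := le_trans hK (Nat.cast_le.2 hk)
      have hz0 : 0 ≤ ‖z‖ := norm_nonneg z
      have hd0 : 0 ≤ 2 / d z := div_nonneg zero_le_two (le_of_lt hdz)
      have h2 : 2 ≤ (k : ℝ) * d z := by
        have : 2 / d z ≤ (k : ℝ) := by linarith
        calc (2 : ℝ) = 2 / d z * d z := by field_simp
          _ ≤ (k : ℝ) * d z := mul_le_mul_of_nonneg_right this (le_of_lt hdz)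
      have ha : min 1 ((k : ℝ) * d z - 1) = 1 := min_eq_left (by linarith)
      have hb : min 1 ((k : ℝ) + 1 - ‖z‖) = 1 := min_eq_left (by linarith)
      show max (min 1 ((k : ℝ) * d z - 1)) 0 * max (min 1 ((k : ℝ) + 1 - ‖z‖)) 0 = 1
      rw [ha, hb]
      simp
    exact tendsto_atTop_of_eventually_const hconst

end AuxLemmas

/-- **Remark.** Let `Ω ⊂ ℝⁿ` be open and bounded and `u ∈ L^p(Ω;ℝ^m) ∩ W^{1,q}(Ω;ℝ^m)` with
`1/p + 1/q = 1`.  Then `u` satisfies property (P) for every choice of indices, and for all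
`i, i' ∈ {1,…,m}`, `j ∈ {1,…,n}`:
`∫ φ(x,y) y^i d(μ_u)^{i'}_j = ∫_Ω φ(x,u(x)) u^i(x) ∂_j u^{i'}(x) dx` for `φ ∈ C_c(Ω×ℝ^m)`,
and `∫ φ d(ν_u)^{i',i}_j = ∫_Ω φ(x) u^i(x) ∂_j u^{i'}(x) dx` for `φ ∈ C_c(Ω)`; in
particular `(ν_u)^{i',i}_j` is absolutely continuous and coincides a.e. with the `L¹`
function `u^i ∂_j u^{i'}`. -/
theorem stmt6_sobolev_case (n m : ℕ) (hn : 2 ≤ n) (hm : 2 ≤ m)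
    (Ω : Set (Euc n)) (hΩo : IsOpen Ω) (hΩb : Bornology.IsBounded Ω)
    (u : BVFun n m Ω) (g : Fin m → Fin n → Euc n → ℝ)
    (p q : ℝ≥0∞) (hp : 1 ≤ p) (hq : 1 ≤ q) (hpq : 1 / p + 1 / q = 1)
    -- `u ∈ L^p(Ω;ℝ^m)`
    (hLp : MemLp u.toFun p (volume.restrict Ω))
    -- `u ∈ W^{1,q}(Ω;ℝ^m)`: no jump part, diffuse derivative with density `g ∈ L^q`
    (hW : IsApproxGrad u g)
    (hgq : ∀ i j, MemLp (g i j) q (volume.restrict Ω))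
    (hnojump : ∀ i j, u.Ds i j = 0)
    (μ : Fin m → Fin n → MeasureTheory.SignedMeasure (Euc n × Euc m))
    (hμ : IsLiftingOf u μ) :
    -- property (P) holds for every choice of indices
    (∀ (i i' : Fin m) (j j' : Fin n), i ≠ i' → j ≠ j' → PropP μ i i' j j') ∧
    -- the measure `y^i (μ_u)^{i'}_j`
    (∀ (i i' : Fin m) (j : Fin n) (φ : Euc n × Euc m → ℝ), IsTestP Ω φ →
      sInt (μ i' j) univ (fun pr => φ pr * pr.2 i) =
        ∫ x in Ω, φ (x, u.toFun x) * u.toFun x i * g i' j x ∂volume) ∧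
    -- the measure `(ν_u)^{i',i}_j` coincides with the `L¹` function `u^i ∂_j u^{i'}`
    (∀ (i i' : Fin m) (j : Fin n) (φ : Euc n → ℝ), IsCc Ω φ →
      nuInt u i' i j φ = ∫ x in Ω, φ x * u.toFun x i * g i' j x ∂volume) := by
  classical
  have huasm : AEStronglyMeasurable u.toFun (volume.restrict Ω) :=
    u.integrable.aestronglyMeasurable
  -- coordinate functions
  have hcoordm : ∀ c : Fin m, Continuous fun y : Euc m => y c := by
    intro c
    have hcont := (EuclideanSpace.proj (𝕜 := ℝ) (c : Fin m)).continuous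
    have he : ⇑(EuclideanSpace.proj (𝕜 := ℝ) (c : Fin m)) = fun y : Euc m => y c := by
      funext y
      simp
    rwa [he] at hcont
  have hproj : ∀ c : Fin m,
      AEStronglyMeasurable (fun x => u.toFun x c) (volume.restrict Ω) := fun c =>
    (hcoordm c).comp_aestronglyMeasurable huasm
  have hcoordle : ∀ (y : Euc m) (c : Fin m), ‖y c‖ ≤ ‖y‖ := by
    intro y c
    rw [Real.norm_eq_abs]
    have hsum : y c ^ 2 ≤ ∑ i, ‖y i‖ ^ 2 := by
      have := Finset.single_le_sum (f := fun i => ‖y i‖ ^ 2)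
        (fun i _ => sq_nonneg _) (Finset.mem_univ c)
      simpa [Real.norm_eq_abs, sq_abs] using this
    calc |y c| = Real.sqrt (y c ^ 2) := (Real.sqrt_sq_eq_abs _).symm
      _ ≤ Real.sqrt (∑ i, ‖y i‖ ^ 2) := Real.sqrt_le_sqrt hsum
      _ = ‖y‖ := (EuclideanSpace.norm_eq _).symm
  -- Hölder: u^c * g^{a}_{b} is integrable on Ω
  have hmul : ∀ (c a : Fin m) (b : Fin n),
      Integrable (fun x => u.toFun x c * g a b x) (volume.restrict Ω) := by
    intro c a b
    have hc : MemLp (fun x => u.toFun x c) p (volume.restrict Ω) := by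
      refine hLp.mono (hproj c) ?_
      filter_upwards with x
      exact hcoordle (u.toFun x) c
    haveI : ENNReal.HolderTriple p q 1 := ⟨by simpa [one_div] using hpq⟩
    have hsmul := MeasureTheory.MemLp.smul (r := 1) (hgq a b) hc
    have := memLp_one_iff_integrable.1 hsmul
    simpa [smul_eq_mul, Pi.mul_def] using this
  -- precise representative agrees a.e. with u off the jump set
  have hprec : ∀ᵐ x ∂(volume.restrict Ω), x ∉ u.jumpSet → u.prec x = u.toFun x := by
    have hleb := auxAELeb hΩo u.integrable
    have hEvol : volume {x | x ∈ Ω \ u.jumpSet ∧ ¬IsLebPoint u.toFun x (u.prec x)} = 0 :=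
      auxVolNull _ u.prec_leb
    have hE : ∀ᵐ x ∂(volume.restrict Ω),
        ¬(x ∈ Ω \ u.jumpSet ∧ ¬IsLebPoint u.toFun x (u.prec x)) := by
      refine ae_restrict_of_ae ?_
      rw [MeasureTheory.ae_iff]
      have hset : {x | ¬¬(x ∈ Ω \ u.jumpSet ∧ ¬IsLebPoint u.toFun x (u.prec x))} =
          {x | x ∈ Ω \ u.jumpSet ∧ ¬IsLebPoint u.toFun x (u.prec x)} := by
        ext x
        exact not_not
      rw [hset]
      exact hEvol
    filter_upwards [hleb, hE, ae_restrict_mem hΩo.measurableSet] with x hx1 hx2 hx3 hxS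
    have hlp : IsLebPoint u.toFun x (u.prec x) := by
      by_contra hc
      exact hx2 ⟨⟨hx3, hxS⟩, hc⟩
    obtain ⟨ε, hε, hball⟩ := Metric.isOpen_iff.1 hΩo x hx3
    have hI : ∀ᶠ r in 𝓝[>] (0 : ℝ), IntegrableOn u.toFun (ball x r) volume := by
      filter_upwards [Ioo_mem_nhdsGT_of_mem (Set.left_mem_Ico.2 hε)] with r hr
      exact u.integrable.mono_set (subset_trans (ball_subset_ball (le_of_lt hr.2)) hball)
    exact auxLebUnique hI hlp hx1
  -- the jump part vanishes
  have hDs0 : ∀ (a : Fin m) (b : Fin n) (A : Set (Euc n)) (f : Euc n → ℝ),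
      sInt (u.Ds a b) A f = 0 := by
    intro a b A f
    rw [sInt, hnojump a b, MeasureTheory.SignedMeasure.toJordanDecomposition_zero]
    simp
  -- conclusion 3
  have hnu : ∀ (i i' : Fin m) (j : Fin n) (φ : Euc n → ℝ), IsCc Ω φ →
      nuInt u i' i j φ = ∫ x in Ω, φ x * u.toFun x i * g i' j x ∂volume := by
    intro i i' j φ hφ
    obtain ⟨hφc, hφs, hφΩ⟩ := hφ
    obtain ⟨C, hC⟩ := hφs.exists_bound_of_continuous hφc
    rw [nuInt, hDs0, add_zero]
    refine auxSIntDd hΩo u g hW i' j _ (fun x => φ x * u.toFun x i) ?_ ?_ ?_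
    · filter_upwards [hprec] with x hx hxS
      rw [hx hxS]
    · exact hφc.aestronglyMeasurable.mul (hproj i)
    · simpa [mul_assoc] using
        (hmul i i' j).bdd_mul hφc.aestronglyMeasurable (Filter.Eventually.of_forall hC)
  -- conclusion 2
  have hmu2 : ∀ (i i' : Fin m) (j : Fin n) (φ : Euc n × Euc m → ℝ), IsTestP Ω φ →
      sInt (μ i' j) univ (fun pr => φ pr * pr.2 i) =
        ∫ x in Ω, φ (x, u.toFun x) * u.toFun x i * g i' j x ∂volume := by
    intro i i' j φ hφ
    obtain ⟨hφc, hφs, hφΩ⟩ := hφ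
    obtain ⟨C, hC⟩ := hφs.exists_bound_of_continuous hφc
    have hcoordP : Continuous fun pr : Euc n × Euc m => pr.2 i :=
      (hcoordm i).comp continuous_snd
    have hψ : IsTestP Ω (fun pr => φ pr * pr.2 i) := by
      refine ⟨hφc.mul hcoordP, hφs.mul_right, ?_⟩
      exact subset_trans (tsupport_mul_subset_left (f := φ)
        (g := fun pr : Euc n × Euc m => pr.2 i)) hφΩ
    rw [hμ.2 i' j _ hψ, liftInt, hDs0, add_zero]
    have hpairm : AEStronglyMeasurable (fun x => (x, u.toFun x) : Euc n → Euc n × Euc m)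
        (volume.restrict Ω) := aestronglyMeasurable_id.prodMk huasm
    refine auxSIntDd hΩo u g hW i' j _ (fun x => φ (x, u.toFun x) * u.toFun x i) ?_ ?_ ?_
    · filter_upwards [hprec] with x hx hxS
      rw [hx hxS]
    · exact (hφc.comp_aestronglyMeasurable hpairm).mul (hproj i)
    · simpa [mul_assoc] using (hmul i i' j).bdd_mul
        (hφc.comp_aestronglyMeasurable hpairm) (Filter.Eventually.of_forall fun x => hC _)
  refine ⟨?_, hmu2, hnu⟩
  -- Property (P): master integrability statement
  have master : ∀ (c a : Fin m) (b : Fin n),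
      Integrable (fun pr : Euc n × Euc m => pr.2 c) ((μ a b).totalVariation) := by
    intro c a b
    obtain ⟨hP, hN⟩ := auxJordan u g hW a b
    set ρ := volume.restrict Ω with hρ
    set h := g a b with hh
    have hhm : Measurable h := hW.1 a b
    set P : Measure (Euc n) := ρ.withDensity (fun x => (((h x).toNNReal : ℝ≥0) : ℝ≥0∞))
      with hPd
    set N : Measure (Euc n) := ρ.withDensity (fun x => (((-h x).toNNReal : ℝ≥0) : ℝ≥0∞))
      with hNd
    haveI hPfin : IsFiniteMeasure P := by rw [← hP]; infer_instance
    haveI hNfin : IsFiniteMeasure N := by rw [← hN]; infer_instance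
    set u' := huasm.mk u.toFun with hu'
    have hu'sm : MeasureTheory.StronglyMeasurable u' := huasm.stronglyMeasurable_mk
    have hu'ae : u.toFun =ᵐ[ρ] u' := huasm.ae_eq_mk
    set F : Euc n → Euc n × Euc m := fun x => (x, u' x) with hF
    have hFm : Measurable F := measurable_id.prodMk hu'sm.measurable
    set Pμ := P.map F with hPμ
    set Nμ := N.map F with hNμ
    haveI hPμfin : IsFiniteMeasure Pμ := by
      constructor
      rw [hPμ, Measure.map_apply hFm MeasurableSet.univ]
      exact measure_lt_top P _
    haveI hNμfin : IsFiniteMeasure Nμ := by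
      constructor
      rw [hNμ, Measure.map_apply hFm MeasurableSet.univ]
      exact measure_lt_top N _
    set U : Set (Euc n × Euc m) := Ω ×ˢ (Set.univ : Set (Euc m)) with hUdef
    have hUo : IsOpen U := hΩo.prod isOpen_univ
    have hUm : MeasurableSet U := hUo.measurableSet
    have hFU : F ⁻¹' Uᶜ = Ωᶜ := by
      ext x
      simp [hUdef, hF]
    have hoffΩ : ∀ w : Euc n → ℝ≥0∞, ρ.withDensity w Ωᶜ = 0 := by
      intro w
      rw [withDensity_apply _ hΩo.measurableSet.compl, hρ,
        Measure.restrict_restrict hΩo.measurableSet.compl, Set.compl_inter_self,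
        Measure.restrict_empty, lintegral_zero_measure]
    have hPμUc : Pμ Uᶜ = 0 := by
      rw [hPμ, Measure.map_apply hFm hUm.compl, hFU, hPd]
      exact hoffΩ _
    have hNμUc : Nμ Uᶜ = 0 := by
      rw [hNμ, Measure.map_apply hFm hUm.compl, hFU, hNd]
      exact hoffΩ _
    have hPN : P ⟂ₘ N := by
      have := (u.Dd a b).toJordanDecomposition.mutuallySingular
      rwa [hP, hN] at this
    have hsing : Pμ ⟂ₘ Nμ := by
      obtain ⟨T, hTm, hT1, hT2⟩ := hPN
      refine ⟨Prod.fst ⁻¹' T, measurable_fst hTm, ?_, ?_⟩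
      · rw [hPμ, Measure.map_apply hFm (measurable_fst hTm)]
        exact hT1
      · rw [← Set.preimage_compl, hNμ,
          Measure.map_apply hFm (measurable_fst hTm.compl)]
        exact hT2
    set pos := (μ a b).toJordanDecomposition.posPart with hposd
    set neg := (μ a b).toJordanDecomposition.negPart with hnegd
    have hz : ∀ W : Set (Euc n × Euc m), MeasurableSet W → W ⊆ Uᶜ → (μ a b) W = 0 := by
      intro W hWm hWU
      refine hμ.1 a b W hWm ?_
      rw [Set.eq_empty_iff_forall_notMem]
      rintro z ⟨hzW, hzU⟩
      exact hWU hzW hzU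
    have hvanish : pos Uᶜ = 0 ∧ neg Uᶜ = 0 := by
      obtain ⟨T, hTm, hT1, hT2⟩ := (μ a b).toJordanDecomposition.mutuallySingular
      have e1 : pos (Uᶜ ∩ Tᶜ) = 0 := by
        have ea := auxApply (μ a b) (hUm.compl.inter hTm.compl)
        rw [hz _ (hUm.compl.inter hTm.compl) Set.inter_subset_left] at ea
        have e2 : neg (Uᶜ ∩ Tᶜ) = 0 :=
          le_antisymm (le_trans (measure_mono Set.inter_subset_right) (le_of_eq hT2))
            zero_le
        rw [← hposd, ← hnegd, e2] at ea
        simp only [ENNReal.toReal_zero, sub_zero] at ea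
        have := ea.symm
        rw [ENNReal.toReal_eq_zero_iff] at this
        exact this.resolve_right (measure_ne_top pos _)
      have e3 : neg (Uᶜ ∩ T) = 0 := by
        have ea := auxApply (μ a b) (hUm.compl.inter hTm)
        rw [hz _ (hUm.compl.inter hTm) Set.inter_subset_left] at ea
        have e2 : pos (Uᶜ ∩ T) = 0 :=
          le_antisymm (le_trans (measure_mono Set.inter_subset_right) (le_of_eq hT1))
            zero_le
        rw [← hposd, ← hnegd, e2] at ea
        simp only [ENNReal.toReal_zero, zero_sub] at ea
        have ea' : (neg (Uᶜ ∩ T)).toReal = 0 := by linarith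
        rw [ENNReal.toReal_eq_zero_iff] at ea'
        exact ea'.resolve_right (measure_ne_top neg _)
      constructor
      · refine le_antisymm ?_ zero_le
        calc pos Uᶜ = pos ((Uᶜ ∩ T) ∪ (Uᶜ ∩ Tᶜ)) := by rw [Set.inter_union_compl]
          _ ≤ pos (Uᶜ ∩ T) + pos (Uᶜ ∩ Tᶜ) := measure_union_le _ _
          _ ≤ pos T + 0 := by
              rw [e1]
              exact add_le_add (measure_mono Set.inter_subset_right) (le_refl 0)
          _ = 0 := by rw [hT1, add_zero]
      · refine le_antisymm ?_ zero_le
        calc neg Uᶜ = neg ((Uᶜ ∩ T) ∪ (Uᶜ ∩ Tᶜ)) := by rw [Set.inter_union_compl]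
          _ ≤ neg (Uᶜ ∩ T) + neg (Uᶜ ∩ Tᶜ) := measure_union_le _ _
          _ ≤ 0 + neg Tᶜ := by
              rw [e3]
              exact add_le_add (le_refl 0) (measure_mono Set.inter_subset_right)
          _ = 0 := by rw [hT2, zero_add]
    -- nonempty complement of U
    have hUcne : (Uᶜ : Set (Euc n × Euc m)).Nonempty := by
      obtain ⟨R, hR⟩ := hΩb.subset_closedBall (0 : Euc n)
      refine ⟨(EuclideanSpace.single (⟨0, by omega⟩ : Fin n) (|R| + 1), 0), ?_⟩
      intro hmem
      have hx : EuclideanSpace.single (⟨0, by omega⟩ : Fin n) (|R| + 1) ∈ Ω := by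
        rw [hUdef] at hmem
        exact hmem.1
      have := hR hx
      rw [Metric.mem_closedBall, dist_zero_right, EuclideanSpace.norm_single] at this
      have h1 : |R| + 1 ≤ R := le_trans (le_of_eq (abs_of_nonneg (by positivity)).symm) this
      have h2 : R ≤ |R| := le_abs_self R
      linarith
    obtain ⟨χ, hχc, hχ0, hχ1, hχcs, hχts, hχtend⟩ := auxCutoff hUo hUcne
    have hbdd : ∀ f : Euc n × Euc m → ℝ, Continuous f → (∃ C, ∀ z, ‖f z‖ ≤ C) →
        ∀ (Q : Measure (Euc n × Euc m)), IsFiniteMeasure Q → Integrable f Q := by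
      rintro f hf ⟨C, hC⟩ Q hQ
      exact Integrable.mono' (integrable_const C) hf.aestronglyMeasurable
        (Filter.Eventually.of_forall hC)
    -- the two key integral identities
    have hpair : ∀ ψ : Euc n × Euc m → ℝ, Continuous ψ → (∃ D, ∀ z, ‖ψ z‖ ≤ D) →
        (∫ z, ψ z ∂Pμ) - (∫ z, ψ z ∂Nμ) = ∫ x, ψ (x, u.toFun x) * h x ∂ρ := by
      rintro ψ hψc ⟨D, hD⟩
      have hψF : AEStronglyMeasurable (fun x => ψ (F x)) ρ :=
        hψc.comp_aestronglyMeasurable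
          (aestronglyMeasurable_id.prodMk hu'sm.aestronglyMeasurable)
      have hint : Integrable (fun x => ψ (F x) * h x) ρ :=
        (hW.2.1 a b).bdd_mul hψF (Filter.Eventually.of_forall fun x => hD _)
      rw [hPμ, hNμ, integral_map hFm.aemeasurable hψc.aestronglyMeasurable,
        integral_map hFm.aemeasurable hψc.aestronglyMeasurable, hPd, hNd,
        auxPairInt ρ h hhm (fun x => ψ (F x)) hψF hint]
      refine integral_congr_ae ?_
      filter_upwards [hu'ae] with x hx
      show ψ (x, u' x) * h x = ψ (x, u.toFun x) * h x
      rw [hx]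
    have hlift : ∀ ψ : Euc n × Euc m → ℝ, Continuous ψ → (∃ D, ∀ z, ‖ψ z‖ ≤ D) →
        liftInt u a b ψ = ∫ x, ψ (x, u.toFun x) * h x ∂ρ := by
      rintro ψ hψc ⟨D, hD⟩
      have hψu : AEStronglyMeasurable (fun x => ψ (x, u.toFun x)) ρ :=
        hψc.comp_aestronglyMeasurable (aestronglyMeasurable_id.prodMk huasm)
      rw [liftInt, hDs0, add_zero]
      refine auxSIntDd hΩo u g hW a b _ (fun x => ψ (x, u.toFun x)) ?_ hψu ?_
      · filter_upwards [hprec] with x hx hxS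
        rw [hx hxS]
      · exact (hW.2.1 a b).bdd_mul hψu (Filter.Eventually.of_forall fun x => hD _)
    -- equality of the two positive combinations via cutoffs
    have hintAB : ∀ f : Euc n × Euc m → ℝ, Continuous f → (∃ C, ∀ z, ‖f z‖ ≤ C) →
        ∫ z, f z ∂(pos + Nμ) = ∫ z, f z ∂(neg + Pμ) := by
      rintro f hfc ⟨C, hC⟩
      have hC0 : 0 ≤ C := le_trans (norm_nonneg (f (0, 0))) (hC _)
      have hfχb : ∀ (k : ℕ) (z : Euc n × Euc m), ‖f z * χ k z‖ ≤ C := by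
        intro k z
        rw [norm_mul]
        have hb : ‖χ k z‖ ≤ 1 := by
          rw [Real.norm_eq_abs, abs_of_nonneg (hχ0 k z)]
          exact hχ1 k z
        calc ‖f z‖ * ‖χ k z‖ ≤ C * 1 := mul_le_mul (hC z) hb (norm_nonneg _) hC0
          _ = C := mul_one C
      have hk : ∀ k : ℕ, ∫ z, f z * χ k z ∂(pos + Nμ) = ∫ z, f z * χ k z ∂(neg + Pμ) := by
        intro k
        have hψc : Continuous fun z => f z * χ k z := hfc.mul (hχc k)
        have hψtest : IsTestP Ω (fun z => f z * χ k z) := by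
          refine ⟨hψc, (hχcs k).mul_left, ?_⟩
          have h5 := hχts k
          rw [hUdef] at h5
          exact subset_trans (tsupport_mul_subset_right (f := f) (g := χ k)) h5
        have h1 := hμ.2 a b _ hψtest
        rw [hlift _ hψc ⟨C, hfχb k⟩, sInt, Measure.restrict_univ,
          Measure.restrict_univ] at h1
        have h2 := hpair _ hψc ⟨C, hfχb k⟩
        have hIpos := hbdd _ hψc ⟨C, hfχb k⟩ pos (by rw [hposd]; infer_instance)
        have hIneg := hbdd _ hψc ⟨C, hfχb k⟩ neg (by rw [hnegd]; infer_instance)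
        have hIPμ := hbdd _ hψc ⟨C, hfχb k⟩ Pμ hPμfin
        have hINμ := hbdd _ hψc ⟨C, hfχb k⟩ Nμ hNμfin
        rw [integral_add_measure hIpos hINμ, integral_add_measure hIneg hIPμ]
        have h3 := h1.trans h2.symm
        linarith
      haveI hposfin : IsFiniteMeasure pos := by rw [hposd]; infer_instance
      haveI hnegfin : IsFiniteMeasure neg := by rw [hnegd]; infer_instance
      have hDCT : ∀ Q : Measure (Euc n × Euc m), IsFiniteMeasure Q → Q Uᶜ = 0 →
          Tendsto (fun k => ∫ z, f z * χ k z ∂Q) atTop (𝓝 (∫ z, f z ∂Q)) := by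
        intro Q hQf hQU
        haveI := hQf
        refine MeasureTheory.tendsto_integral_of_dominated_convergence (fun _ => C)
          (fun k => (hfc.mul (hχc k)).aestronglyMeasurable) (integrable_const C)
          (fun k => Filter.Eventually.of_forall fun z => hfχb k z) ?_
        have haeU : ∀ᵐ z ∂Q, z ∈ U := by
          rw [MeasureTheory.ae_iff]
          exact hQU
        filter_upwards [haeU] with z hzU
        simpa using (hχtend z hzU).const_mul (f z)
      have hA := hDCT (pos + Nμ) inferInstance
        (by rw [Measure.add_apply, hvanish.1, hNμUc, add_zero])
      have hB := hDCT (neg + Pμ) inferInstance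
        (by rw [Measure.add_apply, hvanish.2, hPμUc, add_zero])
      exact tendsto_nhds_unique (hA.congr hk) hB
    -- the measures agree
    haveI hposfin : IsFiniteMeasure pos := by rw [hposd]; infer_instance
    haveI hnegfin : IsFiniteMeasure neg := by rw [hnegd]; infer_instance
    have hAB : pos + Nμ = neg + Pμ := by
      refine MeasureTheory.ext_of_forall_lintegral_eq_of_IsFiniteMeasure ?_
      intro f0
      have hfc : Continuous fun z : Euc n × Euc m => ((f0 z : ℝ)) :=
        NNReal.continuous_coe.comp f0.continuous
      have hfb : ∃ C, ∀ z : Euc n × Euc m, ‖((f0 z : ℝ))‖ ≤ C := by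
        obtain ⟨C0, hC0⟩ := f0.bounded
        refine ⟨(f0 (0, 0) : ℝ) + C0, fun z => ?_⟩
        rw [Real.norm_of_nonneg (f0 z).coe_nonneg]
        have h6 := hC0 z (0, 0)
        rw [NNReal.dist_eq] at h6
        have h7 : ((f0 z : ℝ)) - (f0 (0, 0) : ℝ) ≤ C0 :=
          le_trans (le_abs_self _) h6
        linarith
      have h := hintAB _ hfc hfb
      rw [lintegral_coe_eq_integral _ (hbdd _ hfc hfb _ inferInstance),
        lintegral_coe_eq_integral _ (hbdd _ hfc hfb _ inferInstance), h]
    set J2 : MeasureTheory.JordanDecomposition (Euc n × Euc m) :=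
      @MeasureTheory.JordanDecomposition.mk _ _ Pμ Nμ hPμfin hNμfin hsing with hJ2
    have hμeq : μ a b = J2.toSignedMeasure := by
      refine MeasureTheory.VectorMeasure.ext fun E hE => ?_
      rw [auxApply (μ a b) hE, MeasureTheory.JordanDecomposition.toSignedMeasure,
        MeasureTheory.VectorMeasure.sub_apply,
        Measure.toSignedMeasure_apply_measurable hE,
        Measure.toSignedMeasure_apply_measurable hE]
      have hEeq : pos E + Nμ E = neg E + Pμ E := by
        have h7 := congrArg (fun Q : Measure (Euc n × Euc m) => Q E) hAB
        simpa using h7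
      have h4 := congrArg ENNReal.toReal hEeq
      rw [ENNReal.toReal_add (measure_ne_top _ _) (measure_ne_top _ _),
        ENNReal.toReal_add (measure_ne_top _ _) (measure_ne_top _ _)] at h4
      show (pos E).toReal - (neg E).toReal = (Pμ E).toReal - (Nμ E).toReal
      linarith
    have htv2 : (μ a b).totalVariation = Pμ + Nμ := by
      rw [hμeq]
      show J2.toSignedMeasure.toJordanDecomposition.posPart +
        J2.toSignedMeasure.toJordanDecomposition.negPart = Pμ + Nμ
      rw [MeasureTheory.JordanDecomposition.toJordanDecomposition_toSignedMeasure]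
    rw [htv2, integrable_add_measure]
    have hco : Continuous fun pr : Euc n × Euc m => pr.2 c := (hcoordm c).comp continuous_snd
    have hu'c : MeasureTheory.StronglyMeasurable fun x => u' x c :=
      (hcoordm c).comp_stronglyMeasurable hu'sm
    constructor
    · rw [hPμ, integrable_map_measure hco.aestronglyMeasurable hFm.aemeasurable]
      show Integrable (fun x => u' x c) P
      rw [hPd, integrable_withDensity_iff_integrable_smul hhm.real_toNNReal]
      simp only [NNReal.smul_def, Real.coe_toNNReal', smul_eq_mul]
      refine Integrable.mono' (hmul c a b).abs
        (((hhm.max measurable_const).aestronglyMeasurable).mul hu'c.aestronglyMeasurable) ?_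
      filter_upwards [hu'ae] with x hx
      rw [← hx]
      have h1 : |max (h x) 0| ≤ |h x| := by
        rw [abs_of_nonneg (le_max_right _ _)]
        exact max_le (le_abs_self _) (abs_nonneg _)
      calc ‖max (h x) 0 * u.toFun x c‖ = |max (h x) 0| * |u.toFun x c| := by
            rw [Real.norm_eq_abs, abs_mul]
        _ ≤ |h x| * |u.toFun x c| := mul_le_mul_of_nonneg_right h1 (abs_nonneg _)
        _ = |u.toFun x c * h x| := by rw [abs_mul, mul_comm]
    · rw [hNμ, integrable_map_measure hco.aestronglyMeasurable hFm.aemeasurable]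
      show Integrable (fun x => u' x c) N
      rw [hNd, integrable_withDensity_iff_integrable_smul (f := fun x => (-h x).toNNReal) hhm.neg.real_toNNReal]
      simp only [NNReal.smul_def, Real.coe_toNNReal', smul_eq_mul]
      refine Integrable.mono' (hmul c a b).abs
        (((hhm.neg.max measurable_const).aestronglyMeasurable).mul hu'c.aestronglyMeasurable) ?_
      filter_upwards [hu'ae] with x hx
      rw [← hx]
      have h1 : |max (-h x) 0| ≤ |h x| := by
        rw [abs_of_nonneg (le_max_right _ _), ← abs_neg (h x)]
        exact max_le (le_abs_self _) (abs_nonneg _)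
      calc ‖max (-h x) 0 * u.toFun x c‖ = |max (-h x) 0| * |u.toFun x c| := by
            rw [Real.norm_eq_abs, abs_mul]
        _ ≤ |h x| * |u.toFun x c| := mul_le_mul_of_nonneg_right h1 (abs_nonneg _)
        _ = |u.toFun x c * h x| := by rw [abs_mul, mul_comm]
  intro i i' j j' hii hjj
  exact ⟨master i i' j, master i i' j', master i' i j, master i' i j'⟩

end
end
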